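/- arXiv:1609.02562 — 2 statements merged into one kernel-verified Lean document; each statement's English description precedes it below -/
import Mathlib

section
/- The classes P_proj and NP_proj are closed under reductions: if a sequence (X_n ⊆ P^{𝐧(n)}(F)) reduces to a sequence (Y_n) which is in P_proj, then (X_n) is in P_proj; and if a sequence (X_n ⊆ P^{n_1(n)}(F)) of projective varieties reduces to a sequence (Y_n) which is in NP_proj, then (X_n) is in NP_proj. -/
universe u v

inductive GateLabel (F : Type u) (ι : Type v) where
  | input : ι → GateLabel F ι
  | const : F → GateLabel F ι
  | sum : GateLabel F ι
  | prod : GateLabel F ι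

namespace GateLabel

def isLeaf {F : Type u} {ι : Type v} : GateLabel F ι → Prop
  | input _ => True
  | const _ => True
  | sum => False
  | prod => False

end GateLabel

structure Circuit (F : Type u) (ι : Type v) where
  numGates : ℕ
  label : Fin numGates → GateLabel F ι
  incoming : Fin numGates → List (Fin numGates × F)
  topo : ∀ g, ∀ p ∈ incoming g, (p.1 : ℕ) < (g : ℕ)
  leaf_iff : ∀ g, incoming g = [] ↔ (label g).isLeaf

namespace Circuit

variable {F : Type u} {ι : Type v}

noncomputable def eval [CommSemiring F] (Γ : Circuit F ι) : Fin Γ.numGates → MvPolynomial ι F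
  | g =>
    match Γ.label g with
    | .input v => MvPolynomial.X v
    | .const c => MvPolynomial.C c
    | .sum => ((Γ.incoming g).attach.map (fun p => MvPolynomial.C p.1.2 * Γ.eval p.1.1)).sum
    | .prod => ((Γ.incoming g).attach.map (fun p => MvPolynomial.C p.1.2 * Γ.eval p.1.1)).prod
  termination_by g => (g : ℕ)
  decreasing_by
  all_goals exact Γ.topo g p.1 p.2

def IsOutputGate (Γ : Circuit F ι) (g : Fin Γ.numGates) : Prop :=
  ∀ g' : Fin Γ.numGates, ∀ p ∈ Γ.incoming g', p.1 ≠ g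

open Classical in
noncomputable def outputs [CommSemiring F] (Γ : Circuit F ι) : Multiset (MvPolynomial ι F) :=
  (Finset.univ.filter (fun g => Γ.IsOutputGate g)).val.map Γ.eval

def size (Γ : Circuit F ι) : ℕ := ∑ g : Fin Γ.numGates, (Γ.incoming g).length

def fanOut (Γ : Circuit F ι) (g : Fin Γ.numGates) : ℕ :=
  ∑ g' : Fin Γ.numGates, ((Γ.incoming g').countP (fun p => decide (p.1 = g)))

def MultiHom [CommSemiring F] {M : Type*} [AddCommMonoid M] (w : ι → M) (Γ : Circuit F ι) : Prop :=
  ∀ g, ∃ d : M, (Γ.eval g).IsWeightedHomogeneous w d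

end Circuit

def biWeight (n m : ℕ) : (Fin n ⊕ Fin m) → ℕ × ℕ :=
  Sum.elim (fun _ => (1, 0)) (fun _ => (0, 1))

def triWeight (a b c : ℕ) : ((Fin a ⊕ Fin b) ⊕ Fin c) → ℕ × ℕ × ℕ :=
  Sum.elim (Sum.elim (fun _ => (1, 0, 0)) (fun _ => (0, 1, 0))) (fun _ => (0, 0, 1))

abbrev Circuit.BiHom [CommSemiring F] {n m : ℕ} (Γ : Circuit F (Fin n ⊕ Fin m)) : Prop :=
  Γ.MultiHom (biWeight n m)
namespace Circuit

variable {F : Type u} {ι : Type v}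

/-- Normal bi-homogeneous form: structural conditions (i)-(vi). -/
structure NormalForm (Γ : Circuit F ι) : Prop where
  /-- (i) all leaves are labeled by input variables (no constant leaves). -/
  leaves_input : ∀ g : Fin Γ.numGates, ∀ c : F, Γ.label g ≠ GateLabel.const c
  /-- (ii) all edges from leaves go to sum gates. -/
  leaf_to_sum : ∀ g : Fin Γ.numGates, ∀ p ∈ Γ.incoming g, (Γ.label p.1).isLeaf →
    Γ.label g = GateLabel.sum
  /-- (iii) all output gates are sum gates. -/
  outputs_sum : ∀ g : Fin Γ.numGates, Γ.IsOutputGate g → Γ.label g = GateLabel.sum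
  /-- (iv) alternation: edges into sum gates come from product gates or leaves. -/
  alt_sum : ∀ g : Fin Γ.numGates, Γ.label g = GateLabel.sum →
    ∀ p ∈ Γ.incoming g, Γ.label p.1 = GateLabel.prod ∨ (Γ.label p.1).isLeaf
  /-- (iv) alternation: edges into product gates come from sum gates. -/
  alt_prod : ∀ g : Fin Γ.numGates, Γ.label g = GateLabel.prod →
    ∀ p ∈ Γ.incoming g, Γ.label p.1 = GateLabel.sum
  /-- (v) every product gate has fan-in 2. -/
  prod_fanin : ∀ g : Fin Γ.numGates, Γ.label g = GateLabel.prod → (Γ.incoming g).length = 2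
  /-- (vi) every sum gate has fan-out at most 1. -/
  sum_fanout : ∀ g : Fin Γ.numGates, Γ.label g = GateLabel.sum → Γ.fanOut g ≤ 1

/-- Two circuits have the same shape if they differ only in the weights of their edges. -/
def ShapeEq (Γ Δ : Circuit F ι) : Prop :=
  ∃ h : Γ.numGates = Δ.numGates,
    (∀ g, Γ.label g = Δ.label (Fin.cast h g)) ∧
    (∀ g, (Γ.incoming g).map (fun p => Fin.cast h p.1) =
      (Δ.incoming (Fin.cast h g)).map Prod.fst)

/-- `Φ` is universal for a set `S` of circuits if every circuit in `S` can be obtained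
from `Φ` by re-assigning the weights on the edges of `Φ` (so that the outputs coincide). -/
def UniversalFor [CommSemiring F] (Φ : Circuit F ι) (S : Set (Circuit F ι)) : Prop :=
  ∀ Γ ∈ S, ∃ Φ' : Circuit F ι, Φ'.ShapeEq Φ ∧ Φ'.outputs = Γ.outputs

open Classical in
/-- The number of output polynomials of `Γ` that are bi-homogeneous of bidegree `d`. -/
noncomputable def outputCount [CommSemiring F] {n m : ℕ} (Γ : Circuit F (Fin n ⊕ Fin m))
    (d : ℕ × ℕ) : ℕ :=
  Multiset.card (Γ.outputs.filter fun f => f.IsWeightedHomogeneous (biWeight n m) d)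

end Circuit

open Classical in
noncomputable def nonzeroPolys {F : Type u} {ι : Type v} [CommSemiring F]
    (s : Multiset (MvPolynomial ι F)) : Multiset (MvPolynomial ι F) :=
  s.filter (fun f => f ≠ 0)

/-- A function `ℕ → ℕ` is polynomially bounded. -/
def PolyBounded (f : ℕ → ℕ) : Prop := ∃ c k : ℕ, ∀ n, f n ≤ c * (n + 1) ^ k
section Projective

variable {F : Type u} [Field F]

/-- A homogeneous polynomial `f` vanishes at a point of projective space if it vanishes
on every homogeneous-coordinate representative of the point. -/
def PVanishes {a : ℕ} (f : MvPolynomial (Fin a) F) (p : Projectivization F (Fin a → F)) : Prop :=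
  ∀ (v : Fin a → F) (hv : v ≠ 0), Projectivization.mk F v hv = p → MvPolynomial.eval v f = 0

/-- The common zero set in projective space of a family of (homogeneous) polynomials. -/
def pZeroSet {a : ℕ} (fs : Set (MvPolynomial (Fin a) F)) :
    Set (Projectivization F (Fin a → F)) :=
  {p | ∀ f ∈ fs, PVanishes f p}

/-- A bi-homogeneous polynomial vanishes at a point of a product of two projective spaces. -/
def BiVanishes {a b : ℕ} (f : MvPolynomial (Fin a ⊕ Fin b) F)
    (p : Projectivization F (Fin a → F) × Projectivization F (Fin b → F)) : Prop :=
  ∀ (v : Fin a → F) (w : Fin b → F) (hv : v ≠ 0) (hw : w ≠ 0),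
    Projectivization.mk F v hv = p.1 → Projectivization.mk F w hw = p.2 →
    MvPolynomial.eval (Sum.elim v w) f = 0

/-- The common zero set in a product of two projective spaces. -/
def biZeroSet {a b : ℕ} (fs : Set (MvPolynomial (Fin a ⊕ Fin b) F)) :
    Set (Projectivization F (Fin a → F) × Projectivization F (Fin b → F)) :=
  {p | ∀ f ∈ fs, BiVanishes f p}

/-- A tri-homogeneous polynomial vanishes at a point of a product of three projective spaces. -/
def TriVanishes {a b c : ℕ} (f : MvPolynomial ((Fin a ⊕ Fin b) ⊕ Fin c) F)
    (p : (Projectivization F (Fin a → F) × Projectivization F (Fin b → F)) ×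
      Projectivization F (Fin c → F)) : Prop :=
  ∀ (u : Fin a → F) (v : Fin b → F) (w : Fin c → F) (hu : u ≠ 0) (hv : v ≠ 0) (hw : w ≠ 0),
    Projectivization.mk F u hu = p.1.1 → Projectivization.mk F v hv = p.1.2 →
    Projectivization.mk F w hw = p.2 →
    MvPolynomial.eval (Sum.elim (Sum.elim u v) w) f = 0

/-- The common zero set in a product of three projective spaces. -/
def triZeroSet {a b c : ℕ} (fs : Set (MvPolynomial ((Fin a ⊕ Fin b) ⊕ Fin c) F)) :
    Set ((Projectivization F (Fin a → F) × Projectivization F (Fin b → F)) ×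
      Projectivization F (Fin c → F)) :=
  {p | ∀ f ∈ fs, TriVanishes f p}

/-- A subset of projective space is Zariski closed iff it is the common zero set of a family of
homogeneous polynomials. -/
def IsPClosed {a : ℕ} (X : Set (Projectivization F (Fin a → F))) : Prop :=
  ∃ fs : Set (MvPolynomial (Fin a) F),
    (∀ f ∈ fs, ∃ d : ℕ, f.IsHomogeneous d) ∧ pZeroSet fs = X

/-- A subset of a product of two projective spaces is Zariski closed iff it is the common zero
set of a family of bi-homogeneous polynomials. -/
def IsBiClosed {a b : ℕ} (X : Set (Projectivization F (Fin a → F) ×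
    Projectivization F (Fin b → F))) : Prop :=
  ∃ fs : Set (MvPolynomial (Fin a ⊕ Fin b) F),
    (∀ f ∈ fs, ∃ d : ℕ × ℕ, f.IsWeightedHomogeneous (biWeight a b) d) ∧ biZeroSet fs = X

end Projective

/-- A sequence of subsets of products of two projective spaces; `c1 n` and `c2 n` are the
numbers of homogeneous coordinates of the two factors, so `X n ⊆ ℙ^{c1 n - 1} × ℙ^{c2 n - 1}`. -/
structure BiSeq (F : Type u) [Field F] where
  c1 : ℕ → ℕ
  c2 : ℕ → ℕ
  X : ∀ n : ℕ, Set (Projectivization F (Fin (c1 n) → F) × Projectivization F (Fin (c2 n) → F))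

/-- A sequence of subsets of projective spaces; `c1 n` is the number of homogeneous
coordinates, so `X n ⊆ ℙ^{c1 n - 1}`. -/
structure PSeq (F : Type u) [Field F] where
  c1 : ℕ → ℕ
  X : ∀ n : ℕ, Set (Projectivization F (Fin (c1 n) → F))

variable {F : Type u} [Field F]

/-- The class `P_proj`: a sequence of bi-projective varieties, with polynomially bounded
dimensions, computed by bi-homogeneous circuits of polynomially bounded size whose output
polynomials are polynomially bounded in number and degree. -/
def BiSeq.InPproj (S : BiSeq F) : Prop :=
  PolyBounded S.c1 ∧ PolyBounded S.c2 ∧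
  ∃ Γ : ∀ n : ℕ, Circuit F (Fin (S.c1 n) ⊕ Fin (S.c2 n)),
    PolyBounded (fun n => (Γ n).size) ∧
    PolyBounded (fun n => Multiset.card (Γ n).outputs) ∧
    (∃ D : ℕ → ℕ, PolyBounded D ∧ ∀ n, ∀ f ∈ (Γ n).outputs, f.totalDegree ≤ D n) ∧
    (∀ n, (Γ n).BiHom) ∧
    (∀ n, biZeroSet {f | f ∈ (Γ n).outputs} = S.X n)

/-- The class `NP_proj`: projections of `P_proj` sequences onto the first factor. -/
def PSeq.InNPproj (S : PSeq F) : Prop :=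
  ∃ (c2 : ℕ → ℕ)
    (Y : ∀ n : ℕ, Set (Projectivization F (Fin (S.c1 n) → F) ×
      Projectivization F (Fin (c2 n) → F))),
    BiSeq.InPproj ⟨S.c1, c2, Y⟩ ∧ ∀ n, S.X n = Prod.fst '' Y n

/-- `NP_proj` for sequences of bi-projective varieties: projections, onto the first two factors,
of sequences of tri-projective varieties computed by tri-homogeneous circuits of polynomially
bounded size, with output polynomials polynomially bounded in number and degree. -/
def BiSeq.InNPproj (S : BiSeq F) : Prop :=
  PolyBounded S.c1 ∧ PolyBounded S.c2 ∧
  ∃ (c3 : ℕ → ℕ), PolyBounded c3 ∧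
  ∃ (Y : ∀ n : ℕ, Set ((Projectivization F (Fin (S.c1 n) → F) ×
        Projectivization F (Fin (S.c2 n) → F)) × Projectivization F (Fin (c3 n) → F)))
    (Γ : ∀ n : ℕ, Circuit F ((Fin (S.c1 n) ⊕ Fin (S.c2 n)) ⊕ Fin (c3 n))),
    PolyBounded (fun n => (Γ n).size) ∧
    PolyBounded (fun n => Multiset.card (Γ n).outputs) ∧
    (∃ D : ℕ → ℕ, PolyBounded D ∧ ∀ n, ∀ f ∈ (Γ n).outputs, f.totalDegree ≤ D n) ∧
    (∀ n, (Γ n).MultiHom (triWeight (S.c1 n) (S.c2 n) (c3 n))) ∧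
    (∀ n, triZeroSet {f | f ∈ (Γ n).outputs} = Y n) ∧
    (∀ n, S.X n = Prod.fst '' Y n)

/-- A constant map. -/
def IsConstMap {α : Type*} {β : Type*} (g : α → β) : Prop := ∃ c, ∀ p, g p = c

/-- A map from a projective space to a projective space is projective-linear if it is constant
or induced by an injective linear map on homogeneous coordinates. -/
def IsProjLinComp₁ {a b : ℕ}
    (g : Projectivization F (Fin a → F) → Projectivization F (Fin b → F)) : Prop :=
  IsConstMap g ∨
  ∃ (L : (Fin a → F) →ₗ[F] (Fin b → F)) (hL : Function.Injective L),
    ∀ p, g p = Projectivization.map L hL p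

/-- A map from a product of two projective spaces to a projective space is projective-linear
if it is constant or induced by an injective linear map depending on only one factor. -/
def IsProjLinComp₂ {a b c : ℕ}
    (g : Projectivization F (Fin a → F) × Projectivization F (Fin b → F) →
      Projectivization F (Fin c → F)) : Prop :=
  IsConstMap g ∨
  (∃ (L : (Fin a → F) →ₗ[F] (Fin c → F)) (hL : Function.Injective L),
    ∀ p, g p = Projectivization.map L hL p.1) ∨
  (∃ (L : (Fin b → F) →ₗ[F] (Fin c → F)) (hL : Function.Injective L),
    ∀ p, g p = Projectivization.map L hL p.2)

/-- Reduction of a sequence of projective varieties to a sequence of projective varieties. -/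
def PSeq.Reduces (S T : PSeq F) : Prop :=
  ∃ p : ℕ → ℕ, PolyBounded p ∧
    ∃ ρ : ∀ n : ℕ, Projectivization F (Fin (S.c1 n) → F) →
        Projectivization F (Fin (T.c1 (p n)) → F),
      (∀ n, IsProjLinComp₁ (ρ n)) ∧ ∀ n, S.X n = (ρ n) ⁻¹' (T.X (p n))

/-- Reduction of a sequence of projective varieties to a sequence of bi-projective varieties. -/
def PSeq.ReducesToBi (S : PSeq F) (T : BiSeq F) : Prop :=
  ∃ p : ℕ → ℕ, PolyBounded p ∧
    ∃ ρ : ∀ n : ℕ, Projectivization F (Fin (S.c1 n) → F) →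
        Projectivization F (Fin (T.c1 (p n)) → F) × Projectivization F (Fin (T.c2 (p n)) → F),
      (∀ n, IsProjLinComp₁ (fun x => (ρ n x).1) ∧ IsProjLinComp₁ (fun x => (ρ n x).2)) ∧
      ∀ n, S.X n = (ρ n) ⁻¹' (T.X (p n))

/-- Reduction of a sequence of bi-projective varieties to a sequence of bi-projective
varieties. -/
def BiSeq.Reduces (S T : BiSeq F) : Prop :=
  ∃ p : ℕ → ℕ, PolyBounded p ∧
    ∃ ρ : ∀ n : ℕ, Projectivization F (Fin (S.c1 n) → F) × Projectivization F (Fin (S.c2 n) → F) →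
        Projectivization F (Fin (T.c1 (p n)) → F) × Projectivization F (Fin (T.c2 (p n)) → F),
      (∀ n, IsProjLinComp₂ (fun x => (ρ n x).1) ∧ IsProjLinComp₂ (fun x => (ρ n x).2)) ∧
      ∀ n, S.X n = (ρ n) ⁻¹' (T.X (p n))
/-- The Segre coordinates of a pair of coordinate vectors. -/
def segreVec {F : Type u} [Field F] {a b : ℕ} (v : Fin a → F) (w : Fin b → F) :
    Fin (a * b) → F :=
  fun k => v (finProdFinEquiv.symm k).1 * w (finProdFinEquiv.symm k).2

/-- The image of a subset of `ℙ^{a-1} × ℙ^{b-1}` under the Segre embedding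
`ℙ^{a-1} × ℙ^{b-1} → ℙ^{ab-1}`, `([x_i], [t_j]) ↦ [x_i t_j]`. -/
def segreImage {F : Type u} [Field F] {a b : ℕ}
    (X : Set (Projectivization F (Fin a → F) × Projectivization F (Fin b → F))) :
    Set (Projectivization F (Fin (a * b) → F)) :=
  {q | ∃ p ∈ X, ∃ (v : Fin a → F) (w : Fin b → F) (hv : v ≠ 0) (hw : w ≠ 0)
      (hz : segreVec v w ≠ 0),
      Projectivization.mk F v hv = p.1 ∧ Projectivization.mk F w hw = p.2 ∧
      Projectivization.mk F (segreVec v w) hz = q}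

/-- The complexity of a subset of projective space: the least size of a homogeneous arithmetic
circuit whose output polynomials are homogeneous with common zero set equal to `X`. -/
noncomputable def pComplexity {F : Type u} [Field F] {a : ℕ}
    (X : Set (Projectivization F (Fin a → F))) : ℕ :=
  sInf {s : ℕ | ∃ Γ : Circuit F (Fin a),
    (∀ g, ∃ d : ℕ, (Γ.eval g).IsHomogeneous d) ∧
    pZeroSet {f | f ∈ Γ.outputs} = X ∧ Γ.size = s}

/-- The universal degree-`d` polynomial `∑_{|M| = d} a_M x^M`, with the coefficient variables
`a_M` enumerated by `Fin ((n+d).choose d)` via an equivalence `e` with the set of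
degree-`d` monomials in `x_0, …, x_n`. -/
noncomputable def univHyperPoly (F : Type u) [Field F] (n d : ℕ)
    (e : Fin ((n + d).choose d) ≃ {M : Fin (n + 1) →₀ ℕ // (M.sum fun _ k => k) = d}) :
    MvPolynomial (Fin (n + 1) ⊕ Fin ((n + d).choose d)) F :=
  ∑ k : Fin ((n + d).choose d),
    MvPolynomial.X (Sum.inr k) * MvPolynomial.monomial ((e k).1.mapDomain Sum.inl) 1

/-- The `i`-th incidence polynomial `∑_M A_{i,M} x^M` expressing that the `i`-th member of a
tuple of `n+1` degree-`d` forms in `x_0, …, x_n` (with coefficient coordinates `A`) vanishes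
at `x`. -/
noncomputable def incidencePoly (F : Type u) [Field F] (n d : ℕ)
    (e : Fin ((n + d).choose d) ≃ {M : Fin (n + 1) →₀ ℕ // (M.sum fun _ k => k) = d})
    (i : Fin (n + 1)) :
    MvPolynomial (Fin ((n + 1) * (n + d).choose d) ⊕ Fin (n + 1)) F :=
  ∑ k : Fin ((n + d).choose d),
    MvPolynomial.X (Sum.inl (finProdFinEquiv (i, k))) *
      MvPolynomial.monomial ((e k).1.mapDomain Sum.inr) 1
section Aux
open MvPolynomial

variable {F : Type u} {ι : Type v}

theorem Circuit.eval_def' [CommSemiring F] (Γ : Circuit F ι) (g : Fin Γ.numGates) :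
    Γ.eval g = match Γ.label g with
      | .input v => MvPolynomial.X v
      | .const c => MvPolynomial.C c
      | .sum => ((Γ.incoming g).map (fun p => MvPolynomial.C p.2 * Γ.eval p.1)).sum
      | .prod => ((Γ.incoming g).map (fun p => MvPolynomial.C p.2 * Γ.eval p.1)).prod := by
  rw [Circuit.eval]
  rcases h : Γ.label g with v | c | - | - <;> simp only [h]
  · rw [← List.attach_map_val (l := Γ.incoming g) (f := fun p => MvPolynomial.C p.2 * Γ.eval p.1)]
  · rw [← List.attach_map_val (l := Γ.incoming g) (f := fun p => MvPolynomial.C p.2 * Γ.eval p.1)]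

end Aux

section Aux2
open MvPolynomial

variable {F : Type u} {ι : Type v}

theorem Circuit.eval_input [CommSemiring F] (Γ : Circuit F ι) {g : Fin Γ.numGates} {v : ι}
    (h : Γ.label g = .input v) : Γ.eval g = MvPolynomial.X v := by
  rw [Circuit.eval_def', h]

theorem Circuit.eval_const [CommSemiring F] (Γ : Circuit F ι) {g : Fin Γ.numGates} {c : F}
    (h : Γ.label g = .const c) : Γ.eval g = MvPolynomial.C c := by
  rw [Circuit.eval_def', h]

theorem Circuit.eval_sum [CommSemiring F] (Γ : Circuit F ι) {g : Fin Γ.numGates}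
    (h : Γ.label g = .sum) :
    Γ.eval g = ((Γ.incoming g).map (fun p => MvPolynomial.C p.2 * Γ.eval p.1)).sum := by
  rw [Circuit.eval_def', h]

theorem Circuit.eval_prod [CommSemiring F] (Γ : Circuit F ι) {g : Fin Γ.numGates}
    (h : Γ.label g = .prod) :
    Γ.eval g = ((Γ.incoming g).map (fun p => MvPolynomial.C p.2 * Γ.eval p.1)).prod := by
  rw [Circuit.eval_def', h]

theorem Circuit.mem_outputs_iff [CommSemiring F] (Γ : Circuit F ι) (f : MvPolynomial ι F) :
    f ∈ Γ.outputs ↔ ∃ g : Fin Γ.numGates, Γ.IsOutputGate g ∧ Γ.eval g = f := by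
  classical
  simp [Circuit.outputs, Finset.mem_filter]

theorem Circuit.card_outputs_le [CommSemiring F] (Γ : Circuit F ι) :
    Multiset.card Γ.outputs ≤ Γ.numGates := by
  classical
  rw [Circuit.outputs, Multiset.card_map]
  exact (Finset.card_filter_le _ _).trans (by simp)

theorem Circuit.numGates_le [CommSemiring F] (Γ : Circuit F ι) :
    Γ.numGates ≤ 2 * Γ.size + Multiset.card Γ.outputs := by
  classical
  -- split gates into those with empty incoming and those without
  have hsize : ∀ s : Finset (Fin Γ.numGates), (∀ g ∈ s, Γ.incoming g ≠ []) →
      s.card ≤ Γ.size := by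
    intro s hs
    calc s.card = ∑ g ∈ s, 1 := by simp
    _ ≤ ∑ g ∈ s, (Γ.incoming g).length := by
        refine Finset.sum_le_sum fun g hg => ?_
        have := hs g hg
        have : (Γ.incoming g).length ≠ 0 := by simpa [List.length_eq_zero_iff] using this
        omega
    _ ≤ ∑ g : Fin Γ.numGates, (Γ.incoming g).length := Finset.sum_le_sum_of_subset (by simp)
    _ = Γ.size := rfl
  -- non-output gates with empty incoming: they are sources of edges
  have hne : (Finset.univ.filter (fun g : Fin Γ.numGates => ¬ Γ.IsOutputGate g)).card
      ≤ Γ.size := by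
    have hsub : (Finset.univ.filter (fun g : Fin Γ.numGates => ¬ Γ.IsOutputGate g)) ⊆
        Finset.univ.biUnion (fun g' : Fin Γ.numGates =>
          ((Γ.incoming g').map Prod.fst).toFinset) := by
      intro g hg
      rw [Finset.mem_filter] at hg
      obtain ⟨-, hg⟩ := hg
      rw [Circuit.IsOutputGate] at hg
      push_neg at hg
      obtain ⟨g', p, hp, hpe⟩ := hg
      refine Finset.mem_biUnion.2 ⟨g', Finset.mem_univ _, ?_⟩
      simp only [List.mem_toFinset, List.mem_map]
      exact ⟨p, hp, hpe⟩
    calc (Finset.univ.filter (fun g : Fin Γ.numGates => ¬ Γ.IsOutputGate g)).card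
        ≤ (Finset.univ.biUnion (fun g' : Fin Γ.numGates =>
          ((Γ.incoming g').map Prod.fst).toFinset)).card := Finset.card_le_card hsub
      _ ≤ ∑ g' : Fin Γ.numGates, ((Γ.incoming g').map Prod.fst).toFinset.card :=
          Finset.card_biUnion_le
      _ ≤ ∑ g' : Fin Γ.numGates, (Γ.incoming g').length := by
          refine Finset.sum_le_sum fun g' _ => ?_
          exact (List.toFinset_card_le _).trans (by simp)
      _ = Γ.size := rfl
  have houtputs : (Finset.univ.filter (fun g : Fin Γ.numGates => Γ.IsOutputGate g)).card
      = Multiset.card Γ.outputs := by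
    rw [Circuit.outputs, Multiset.card_map]; rfl
  have := Finset.card_filter_add_card_filter_not
    (s := (Finset.univ : Finset (Fin Γ.numGates)))
    (p := fun g => Γ.IsOutputGate g)
  simp only [Finset.card_univ, Fintype.card_fin] at this
  omega

end Aux2

section Aux3
open MvPolynomial

variable {F : Type u} {ι : Type v} {κ : Type*} [CommSemiring F]

theorem MvPolynomial.IsWeightedHomogeneous.aeval_comp {M M' : Type*} [AddCommMonoid M] [AddCommMonoid M']
    (φ : M →+ M') {w : ι → M} {w' : κ → M'} (σ : ι → MvPolynomial κ F)
    (hσ : ∀ i, (σ i).IsWeightedHomogeneous w' (φ (w i))) {f : MvPolynomial ι F} {d : M}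
    (hf : f.IsWeightedHomogeneous w d) :
    (MvPolynomial.aeval σ f).IsWeightedHomogeneous w' (φ d) := by
  classical
  rw [← MvPolynomial.mem_weightedHomogeneousSubmodule]
  rw [f.as_sum, map_sum]
  refine Submodule.sum_mem _ fun e he => ?_
  rw [MvPolynomial.mem_weightedHomogeneousSubmodule, MvPolynomial.aeval_monomial]
  have hwd : Finsupp.weight w e = d := hf (MvPolynomial.mem_support_iff.1 he)
  have h1 : (algebraMap F (MvPolynomial κ F) (f.coeff e)).IsWeightedHomogeneous w' 0 := by
    simpa [MvPolynomial.algebraMap_eq] using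
      MvPolynomial.isWeightedHomogeneous_C w' (R := F) (f.coeff e)
  have h2 : (e.prod fun i k => σ i ^ k).IsWeightedHomogeneous w'
      (∑ i ∈ e.support, (e i) • φ (w i)) := by
    rw [Finsupp.prod]
    refine MvPolynomial.IsWeightedHomogeneous.prod _ _ _ fun i _ => ?_
    -- σ i ^ e i homogeneous of degree e i • φ (w i)
    induction e i with
    | zero => simpa using MvPolynomial.isWeightedHomogeneous_one F w'
    | succ n ih =>
        rw [pow_succ, succ_nsmul]
        exact ih.mul (hσ i)
  have := h1.mul h2
  rw [zero_add] at this
  convert this using 2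
  rw [← hwd, Finsupp.weight_apply, map_finsuppSum, Finsupp.sum]
  exact Finset.sum_congr rfl fun i _ => by rw [map_nsmul]

theorem MvPolynomial.IsWeightedHomogeneous.eval_scale {M : Type*} [AddCommMonoid M]
    {w : ι → M} {f : MvPolynomial ι F} {d : M}
    (hf : f.IsWeightedHomogeneous w d) (χ : Multiplicative M →* F) (g : ι → F) :
    MvPolynomial.eval (fun i => χ (Multiplicative.ofAdd (w i)) * g i) f =
      χ (Multiplicative.ofAdd d) * MvPolynomial.eval g f := by
  classical
  rw [MvPolynomial.eval_eq, MvPolynomial.eval_eq, Finset.mul_sum]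
  refine Finset.sum_congr rfl fun e he => ?_
  have hwd : Finsupp.weight w e = d := hf (MvPolynomial.mem_support_iff.1 he)
  have key : ∏ i ∈ e.support, (χ (Multiplicative.ofAdd (w i)) * g i) ^ e i
      = χ (Multiplicative.ofAdd d) * ∏ i ∈ e.support, g i ^ e i := by
    rw [← hwd, Finsupp.weight_apply, Finsupp.sum]
    simp only [mul_pow]
    rw [Finset.prod_mul_distrib]
    congr 1
    calc ∏ x ∈ e.support, χ (Multiplicative.ofAdd (w x)) ^ e x
        = ∏ x ∈ e.support, χ (Multiplicative.ofAdd (e x • w x)) := by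
          refine Finset.prod_congr rfl fun i _ => ?_
          rw [ofAdd_nsmul, map_pow]
      _ = χ (∏ x ∈ e.support, Multiplicative.ofAdd (e x • w x)) := (map_prod χ _ _).symm
      _ = χ (Multiplicative.ofAdd (∑ a ∈ e.support, e a • w a)) := by
          rw [← ofAdd_sum]
  rw [key]; ring
end Aux3

section Aux4
open MvPolynomial

variable {F : Type u} {ι : Type v} {κ : Type*} [CommSemiring F]

theorem totalDegree_aeval_le_of_le_one (σ : ι → MvPolynomial κ F)
    (hσ : ∀ i, (σ i).totalDegree ≤ 1) (f : MvPolynomial ι F) :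
    (MvPolynomial.aeval σ f).totalDegree ≤ f.totalDegree := by
  classical
  conv_lhs => rw [f.as_sum]
  rw [map_sum]
  refine (MvPolynomial.totalDegree_finset_sum _ _).trans ?_
  refine Finset.sup_le fun e he => ?_
  rw [MvPolynomial.aeval_monomial]
  refine (MvPolynomial.totalDegree_mul _ _).trans ?_
  have h1 : (algebraMap F (MvPolynomial κ F) (f.coeff e)).totalDegree = 0 := by
    rw [MvPolynomial.algebraMap_eq, MvPolynomial.totalDegree_C]
  rw [h1, zero_add, Finsupp.prod]
  refine (MvPolynomial.totalDegree_finset_prod _ _).trans ?_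
  calc ∑ i ∈ e.support, (σ i ^ e i).totalDegree
      ≤ ∑ i ∈ e.support, e i := by
        refine Finset.sum_le_sum fun i _ => ?_
        refine (MvPolynomial.totalDegree_pow _ _).trans ?_
        calc e i * (σ i).totalDegree ≤ e i * 1 := Nat.mul_le_mul_left _ (hσ i)
          _ = e i := Nat.mul_one _
    _ ≤ f.totalDegree := by
        have := MvPolynomial.le_totalDegree (p := f) (s := e) he
        simpa [Finsupp.sum] using this

end Aux4

section SubstCircuit
open MvPolynomial

/-- Decoding of the gates of the substituted circuit. -/
def decode3' (K N g : ℕ) : (Fin K ⊕ Fin N) ⊕ Unit :=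
  if h : g < K then .inl (.inl ⟨g, h⟩)
  else if h2 : g - K < N then .inl (.inr ⟨g - K, h2⟩)
  else .inr ()

def decode3 (K N : ℕ) (g : Fin (K + N + 1)) : (Fin K ⊕ Fin N) ⊕ Unit :=
  decode3' K N (g : ℕ)

def encode3 (K N : ℕ) : (Fin K ⊕ Fin N) ⊕ Unit → Fin (K + N + 1)
  | .inl (.inl j) => ⟨(j : ℕ), by have := j.isLt; omega⟩
  | .inl (.inr og) => ⟨K + (og : ℕ), by have := og.isLt; omega⟩
  | .inr _ => ⟨K + N, by omega⟩

theorem encode3_val (K N : ℕ) (x : (Fin K ⊕ Fin N) ⊕ Unit) :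
    (encode3 K N x : ℕ) = match x with
      | .inl (.inl j) => (j : ℕ)
      | .inl (.inr og) => K + (og : ℕ)
      | .inr _ => K + N := by
  rcases x with (j | og) | u <;> rfl

theorem decode3_encode3 (K N : ℕ) (x : (Fin K ⊕ Fin N) ⊕ Unit) :
    decode3 K N (encode3 K N x) = x := by
  rcases x with (j | og) | u
  · have := j.isLt
    show decode3' K N (j : ℕ) = _
    rw [decode3', dif_pos this]
  · have := og.isLt
    show decode3' K N (K + (og : ℕ)) = _
    rw [decode3', dif_neg (by omega), dif_pos (by omega)]
    congr 2
    exact Fin.ext (by simp)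
  · show decode3' K N (K + N) = _
    rw [decode3', dif_neg (by omega), dif_neg (by omega)]

theorem encode3_decode3 (K N : ℕ) (g : Fin (K + N + 1)) :
    encode3 K N (decode3 K N g) = g := by
  have := g.isLt
  rw [decode3, decode3']
  split_ifs with h h2
  · exact Fin.ext rfl
  · exact Fin.ext (by show K + ((g : ℕ) - K) = (g : ℕ); omega)
  · exact Fin.ext (by show K + N = (g : ℕ); omega)

theorem decode3_eq_imp (K N : ℕ) (g : Fin (K + N + 1)) (x : (Fin K ⊕ Fin N) ⊕ Unit)
    (h : decode3 K N g = x) : g = encode3 K N x := by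
  rw [← h, encode3_decode3]

variable {F : Type u} {ι : Type v} {κ : Type*} [CommSemiring F] [Fintype κ] [DecidableEq κ]

/-- A linear polynomial with coefficients `L`. -/
noncomputable def linPoly (L : κ → F) : MvPolynomial κ F :=
  ∑ k : κ, MvPolynomial.C (L k) * MvPolynomial.X k

/-- Constant or linear polynomial attached to substitution data. -/
noncomputable def sPoly : F ⊕ (κ → F) → MvPolynomial κ F
  | .inl c => MvPolynomial.C c
  | .inr L => linPoly L

theorem eval_linPoly (L : κ → F) (u : κ → F) :
    MvPolynomial.eval u (linPoly L) = ∑ k : κ, L k * u k := by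
  simp [linPoly]

theorem totalDegree_sPoly_le (s : F ⊕ (κ → F)) : (sPoly s).totalDegree ≤ 1 := by
  rcases s with c | L
  · simp [sPoly]
  · rw [sPoly, linPoly]
    refine (MvPolynomial.totalDegree_finset_sum _ _).trans ?_
    refine Finset.sup_le fun k _ => ?_
    refine (MvPolynomial.totalDegree_mul _ _).trans ?_
    have h1 : (MvPolynomial.X k : MvPolynomial κ F).totalDegree ≤ 1 := by
      rw [MvPolynomial.X]
      exact (MvPolynomial.totalDegree_monomial_le _ _).trans (by simp)
    simp only [MvPolynomial.totalDegree_C, zero_add]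
    exact h1

/-- The circuit obtained from `Γ` by substituting constants or linear forms (in a new set of
variables `κ`) for the variables of `Γ`. -/
noncomputable def Circuit.subst (Γ : Circuit F ι) (σ : ι → F ⊕ (κ → F)) : Circuit F κ where
  numGates := Fintype.card κ + Γ.numGates + 1
  label g :=
    match decode3 (Fintype.card κ) Γ.numGates g with
    | .inl (.inl j) => .input ((Fintype.equivFin κ).symm j)
    | .inl (.inr og) =>
      match Γ.label og with
      | .input i =>
        match σ i with
        | .inl c => .const c
        | .inr _ => if Fintype.card κ = 0 then .const 0 else .sum
      | .const c => .const c
      | .sum => .sum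
      | .prod => .prod
    | .inr _ => if Fintype.card κ = 0 then .const 0 else .sum
  incoming g :=
    match decode3 (Fintype.card κ) Γ.numGates g with
    | .inl (.inl _) => []
    | .inl (.inr og) =>
      match Γ.label og with
      | .input i =>
        match σ i with
        | .inl _ => []
        | .inr L => (List.finRange (Fintype.card κ)).map fun j =>
            (encode3 _ _ (.inl (.inl j)), L ((Fintype.equivFin κ).symm j))
      | .const _ => []
      | .sum => (Γ.incoming og).map fun p => (encode3 _ _ (.inl (.inr p.1)), p.2)
      | .prod => (Γ.incoming og).map fun p => (encode3 _ _ (.inl (.inr p.1)), p.2)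
    | .inr _ => (List.finRange (Fintype.card κ)).map fun j =>
        (encode3 _ _ (.inl (.inl j)), (0 : F))
  topo := by
    intro g p hp
    split at hp
    · simp at hp
    · rename_i og hd
      have hgv : (g : ℕ) = Fintype.card κ + (og : ℕ) := by
        rw [decode3_eq_imp _ _ _ _ hd, encode3_val]
      split at hp
      · split at hp
        · simp at hp
        · simp only [List.mem_map, List.mem_finRange] at hp
          obtain ⟨j, -, rfl⟩ := hp
          have := j.isLt
          simp only [encode3_val]
          omega
      · simp at hp
      · rename_i hl
        simp only [List.mem_map] at hp
        obtain ⟨q, hq, rfl⟩ := hp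
        have := Γ.topo og q hq
        simp only [encode3_val]
        omega
      · rename_i hl
        simp only [List.mem_map] at hp
        obtain ⟨q, hq, rfl⟩ := hp
        have := Γ.topo og q hq
        simp only [encode3_val]
        omega
    · rename_i hd
      have hgv : (g : ℕ) = Fintype.card κ + Γ.numGates := by
        rw [decode3_eq_imp _ _ _ _ hd, encode3_val]
      simp only [List.mem_map, List.mem_finRange] at hp
      obtain ⟨j, -, rfl⟩ := hp
      have := j.isLt
      simp only [encode3_val]
      omega
  leaf_iff := by
    intro g
    split
    · simp [GateLabel.isLeaf]
    · rename_i og hd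
      split
      · split
        · simp [GateLabel.isLeaf]
        · by_cases hK : Fintype.card κ = 0
          · simp [hK, GateLabel.isLeaf, List.finRange_zero]
          · rw [if_neg hK]
            simp only [GateLabel.isLeaf, iff_false, List.map_eq_nil_iff]
            intro h
            have : (List.finRange (Fintype.card κ)).length = 0 := by rw [h]; rfl
            simp only [List.length_finRange] at this
            exact hK this
      · simp [GateLabel.isLeaf]
      · rename_i hl
        have hne : Γ.incoming og ≠ [] := by
          intro h
          have := (Γ.leaf_iff og).1 h
          rw [hl] at this
          exact this
        simp only [GateLabel.isLeaf, iff_false, List.map_eq_nil_iff]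
        exact hne
      · rename_i hl
        have hne : Γ.incoming og ≠ [] := by
          intro h
          have := (Γ.leaf_iff og).1 h
          rw [hl] at this
          exact this
        simp only [GateLabel.isLeaf, iff_false, List.map_eq_nil_iff]
        exact hne
    · by_cases hK : Fintype.card κ = 0
      · simp [hK, GateLabel.isLeaf, List.finRange_zero]
      · rw [if_neg hK]
        simp only [GateLabel.isLeaf, iff_false, List.map_eq_nil_iff]
        intro h
        have : (List.finRange (Fintype.card κ)).length = 0 := by rw [h]; rfl
        simp only [List.length_finRange] at this
        exact hK this

end SubstCircuit

section SubstEval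
open MvPolynomial

variable {F : Type u} {ι : Type v} {κ : Type*} [CommSemiring F] [Fintype κ] [DecidableEq κ]

variable (Γ : Circuit F ι) (σ : ι → F ⊕ (κ → F))

theorem subst_label_leaf (j : Fin (Fintype.card κ)) :
    (Γ.subst σ).label (encode3 (Fintype.card κ) Γ.numGates (.inl (.inl j))) =
      .input ((Fintype.equivFin κ).symm j) := by
  show (match decode3 (Fintype.card κ) Γ.numGates
      (encode3 (Fintype.card κ) Γ.numGates (.inl (.inl j))) with
    | .inl (.inl j) => GateLabel.input ((Fintype.equivFin κ).symm j)
    | .inl (.inr og) =>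
      match Γ.label og with
      | .input i =>
        match σ i with
        | .inl c => .const c
        | .inr _ => if Fintype.card κ = 0 then .const 0 else .sum
      | .const c => .const c
      | .sum => .sum
      | .prod => .prod
    | .inr _ => if Fintype.card κ = 0 then .const 0 else .sum) = _
  rw [decode3_encode3]

theorem subst_eval_leaf (j : Fin (Fintype.card κ)) :
    (Γ.subst σ).eval (encode3 (Fintype.card κ) Γ.numGates (.inl (.inl j))) =
      MvPolynomial.X ((Fintype.equivFin κ).symm j) :=
  (Γ.subst σ).eval_input (subst_label_leaf Γ σ j)

theorem subst_eval_last :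
    (Γ.subst σ).eval (encode3 (Fintype.card κ) Γ.numGates (.inr ())) = 0 := by
  have hlab : (Γ.subst σ).label (encode3 (Fintype.card κ) Γ.numGates (.inr ())) =
      (if Fintype.card κ = 0 then GateLabel.const 0 else GateLabel.sum) := by
    show (match decode3 (Fintype.card κ) Γ.numGates
        (encode3 (Fintype.card κ) Γ.numGates (.inr ())) with
      | .inl (.inl j) => GateLabel.input ((Fintype.equivFin κ).symm j)
      | .inl (.inr og) =>
        match Γ.label og with
        | .input i =>
          match σ i with
          | .inl c => .const c
          | .inr _ => if Fintype.card κ = 0 then .const 0 else .sum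
        | .const c => .const c
        | .sum => .sum
        | .prod => .prod
      | .inr _ => if Fintype.card κ = 0 then .const 0 else .sum) = _
    rw [decode3_encode3]
  have hinc : (Γ.subst σ).incoming (encode3 (Fintype.card κ) Γ.numGates (.inr ())) =
      (List.finRange (Fintype.card κ)).map fun j =>
        (encode3 _ _ (.inl (.inl j)), (0 : F)) := by
    show (match decode3 (Fintype.card κ) Γ.numGates
        (encode3 (Fintype.card κ) Γ.numGates (.inr ())) with
      | .inl (.inl _) => []
      | .inl (.inr og) =>
        match Γ.label og with
        | .input i =>
          match σ i with
          | .inl _ => []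
          | .inr L => (List.finRange (Fintype.card κ)).map fun j =>
              (encode3 _ _ (.inl (.inl j)), L ((Fintype.equivFin κ).symm j))
        | .const _ => []
        | .sum => (Γ.incoming og).map fun p : Fin Γ.numGates × F =>
            (encode3 _ _ (.inl (.inr p.1)), p.2)
        | .prod => (Γ.incoming og).map fun p : Fin Γ.numGates × F =>
            (encode3 _ _ (.inl (.inr p.1)), p.2)
      | .inr _ => (List.finRange (Fintype.card κ)).map fun j =>
          (encode3 _ _ (.inl (.inl j)), (0 : F))) = _
    rw [decode3_encode3]
  by_cases hK : Fintype.card κ = 0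
  · rw [(Γ.subst σ).eval_const (g := encode3 (Fintype.card κ) Γ.numGates (.inr ())) (by rw [hlab, if_pos hK]), MvPolynomial.C_0]
  · rw [(Γ.subst σ).eval_sum (g := encode3 (Fintype.card κ) Γ.numGates (.inr ())) (by rw [hlab, if_neg hK]), hinc]
    refine List.sum_eq_zero fun x hx => ?_
    replace hx := List.mem_map.1 hx
    obtain ⟨a, ha, rfl⟩ := hx
    obtain ⟨j, -, rfl⟩ := List.mem_map.1 ha
    show MvPolynomial.C (0 : F) * _ = 0
    rw [MvPolynomial.C_0, zero_mul]

end SubstEval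

section SubstEval2
open MvPolynomial

variable {F : Type u} {ι : Type v} {κ : Type*} [CommSemiring F] [Fintype κ] [DecidableEq κ]

variable (Γ : Circuit F ι) (σ : ι → F ⊕ (κ → F))

theorem subst_label_old (og : Fin Γ.numGates) :
    (Γ.subst σ).label (encode3 (Fintype.card κ) Γ.numGates (.inl (.inr og))) =
      (match Γ.label og with
      | .input i =>
        match σ i with
        | .inl c => .const c
        | .inr _ => if Fintype.card κ = 0 then GateLabel.const 0 else .sum
      | .const c => .const c
      | .sum => .sum
      | .prod => .prod) := by
  show (match decode3 (Fintype.card κ) Γ.numGates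
      (encode3 (Fintype.card κ) Γ.numGates (.inl (.inr og))) with
    | .inl (.inl j) => GateLabel.input ((Fintype.equivFin κ).symm j)
    | .inl (.inr og) =>
      match Γ.label og with
      | .input i =>
        match σ i with
        | .inl c => .const c
        | .inr _ => if Fintype.card κ = 0 then .const 0 else .sum
      | .const c => .const c
      | .sum => .sum
      | .prod => .prod
    | .inr _ => if Fintype.card κ = 0 then .const 0 else .sum) = _
  rw [decode3_encode3]

theorem subst_incoming_old (og : Fin Γ.numGates) :
    (Γ.subst σ).incoming (encode3 (Fintype.card κ) Γ.numGates (.inl (.inr og))) =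
      (match Γ.label og with
      | .input i =>
        match σ i with
        | .inl _ => []
        | .inr L => (List.finRange (Fintype.card κ)).map fun j =>
            (encode3 _ _ (.inl (.inl j)), L ((Fintype.equivFin κ).symm j))
      | .const _ => []
      | .sum => (Γ.incoming og).map fun p : Fin Γ.numGates × F =>
          (encode3 _ _ (.inl (.inr p.1)), p.2)
      | .prod => (Γ.incoming og).map fun p : Fin Γ.numGates × F =>
          (encode3 _ _ (.inl (.inr p.1)), p.2)) := by
  show (match decode3 (Fintype.card κ) Γ.numGates
      (encode3 (Fintype.card κ) Γ.numGates (.inl (.inr og))) with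
    | .inl (.inl _) => []
    | .inl (.inr og) =>
      match Γ.label og with
      | .input i =>
        match σ i with
        | .inl _ => []
        | .inr L => (List.finRange (Fintype.card κ)).map fun j =>
            (encode3 _ _ (.inl (.inl j)), L ((Fintype.equivFin κ).symm j))
      | .const _ => []
      | .sum => (Γ.incoming og).map fun p : Fin Γ.numGates × F =>
          (encode3 _ _ (.inl (.inr p.1)), p.2)
      | .prod => (Γ.incoming og).map fun p : Fin Γ.numGates × F =>
          (encode3 _ _ (.inl (.inr p.1)), p.2)
    | .inr _ => (List.finRange (Fintype.card κ)).map fun j =>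
        (encode3 _ _ (.inl (.inl j)), (0 : F))) = _
  rw [decode3_encode3]
  rfl

theorem subst_eval_old_aux (n : ℕ) :
    ∀ og : Fin Γ.numGates, (og : ℕ) < n →
      (Γ.subst σ).eval (encode3 (Fintype.card κ) Γ.numGates (.inl (.inr og))) =
        MvPolynomial.aeval (fun i => sPoly (σ i)) (Γ.eval og) := by
  induction n with
  | zero => intro og h; omega
  | succ n IH =>
    intro og hog
    rcases hl : Γ.label og with i | c | - | -
    · -- input
      rw [Γ.eval_input hl, MvPolynomial.aeval_X]
      rcases hs : σ i with c | L
      · rw [(Γ.subst σ).eval_const (g := encode3 (Fintype.card κ) Γ.numGates (.inl (.inr og)))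
          (by rw [subst_label_old, hl]; dsimp only; rw [hs])]
        rfl
      · by_cases hK : Fintype.card κ = 0
        · rw [(Γ.subst σ).eval_const (g := encode3 (Fintype.card κ) Γ.numGates (.inl (.inr og)))
            (by rw [subst_label_old, hl]; dsimp only; rw [hs, if_pos hK])]
          have : IsEmpty κ := Fintype.card_eq_zero_iff.1 hK
          show _ = linPoly L
          rw [linPoly]
          simp
        · rw [(Γ.subst σ).eval_sum (g := encode3 (Fintype.card κ) Γ.numGates (.inl (.inr og)))
            (by rw [subst_label_old, hl]; dsimp only; rw [hs, if_neg hK]),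
            subst_incoming_old, hl]
          dsimp only
          rw [hs, List.map_map]
          have hterm : ∀ j : Fin (Fintype.card κ),
              ((fun q : Fin ((Γ.subst σ).numGates) × F => MvPolynomial.C q.2 *
                (Γ.subst σ).eval q.1) ∘
                fun j => (encode3 (Fintype.card κ) Γ.numGates (.inl (.inl j)),
                  L ((Fintype.equivFin κ).symm j))) j =
              MvPolynomial.C (L ((Fintype.equivFin κ).symm j)) *
                MvPolynomial.X ((Fintype.equivFin κ).symm j) := by
            intro j
            simp only [Function.comp]
            rw [subst_eval_leaf]
          rw [List.map_congr_left (fun j _ => hterm j), ← Fin.sum_univ_def]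
          show _ = linPoly L
          rw [linPoly]
          exact Fintype.sum_equiv (Fintype.equivFin κ).symm _ _ (fun j => rfl)
    · rw [Γ.eval_const hl, (Γ.subst σ).eval_const (g := encode3 (Fintype.card κ) Γ.numGates (.inl (.inr og))) (by rw [subst_label_old, hl]; try rfl)]
      simp [MvPolynomial.algebraMap_eq]
    · -- sum
      rw [Γ.eval_sum hl, (Γ.subst σ).eval_sum (g := encode3 (Fintype.card κ) Γ.numGates (.inl (.inr og))) (by rw [subst_label_old, hl]; try rfl),
        subst_incoming_old, hl, List.map_map, map_list_sum, List.map_map]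
      congr 1
      refine List.map_congr_left fun p hp => ?_
      have hlt : (p.1 : ℕ) < n := lt_of_lt_of_le (Γ.topo og p hp) (by omega)
      simp only [Function.comp]
      rw [IH p.1 hlt, map_mul, MvPolynomial.aeval_C, MvPolynomial.algebraMap_eq]
    · -- prod
      rw [Γ.eval_prod hl, (Γ.subst σ).eval_prod (g := encode3 (Fintype.card κ) Γ.numGates (.inl (.inr og))) (by rw [subst_label_old, hl]; try rfl),
        subst_incoming_old, hl, List.map_map, map_list_prod, List.map_map]
      congr 1
      refine List.map_congr_left fun p hp => ?_
      have hlt : (p.1 : ℕ) < n := lt_of_lt_of_le (Γ.topo og p hp) (by omega)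
      simp only [Function.comp]
      rw [IH p.1 hlt, map_mul, MvPolynomial.aeval_C, MvPolynomial.algebraMap_eq]

theorem subst_eval_old (og : Fin Γ.numGates) :
    (Γ.subst σ).eval (encode3 (Fintype.card κ) Γ.numGates (.inl (.inr og))) =
      MvPolynomial.aeval (fun i => sPoly (σ i)) (Γ.eval og) :=
  subst_eval_old_aux Γ σ ((og : ℕ) + 1) og (by omega)

end SubstEval2

section SubstOut
open MvPolynomial

variable {F : Type u} {ι : Type v} {κ : Type*} [CommSemiring F] [Fintype κ] [DecidableEq κ]

variable (Γ : Circuit F ι) (σ : ι → F ⊕ (κ → F))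


theorem subst_incoming_last :
    (Γ.subst σ).incoming (encode3 (Fintype.card κ) Γ.numGates (.inr ())) =
      (List.finRange (Fintype.card κ)).map fun j =>
        (encode3 (Fintype.card κ) Γ.numGates (.inl (.inl j)), (0 : F)) := by
  show (match decode3 (Fintype.card κ) Γ.numGates
      (encode3 (Fintype.card κ) Γ.numGates (.inr ())) with
    | .inl (.inl _) => []
    | .inl (.inr og) =>
      match Γ.label og with
      | .input i =>
        match σ i with
        | .inl _ => []
        | .inr L => (List.finRange (Fintype.card κ)).map fun j =>
            (encode3 _ _ (.inl (.inl j)), L ((Fintype.equivFin κ).symm j))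
      | .const _ => []
      | .sum => (Γ.incoming og).map fun p : Fin Γ.numGates × F =>
          (encode3 _ _ (.inl (.inr p.1)), p.2)
      | .prod => (Γ.incoming og).map fun p : Fin Γ.numGates × F =>
          (encode3 _ _ (.inl (.inr p.1)), p.2)
    | .inr _ => (List.finRange (Fintype.card κ)).map fun j =>
        (encode3 _ _ (.inl (.inl j)), (0 : F))) = _
  rw [decode3_encode3]

theorem subst_mem_incoming (g : Fin ((Γ.subst σ).numGates))
    (p : Fin ((Γ.subst σ).numGates) × F) (hp : p ∈ (Γ.subst σ).incoming g) :
    (∃ j : Fin (Fintype.card κ), p.1 = encode3 (Fintype.card κ) Γ.numGates (.inl (.inl j))) ∨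
    (∃ og' og : Fin Γ.numGates, ∃ c : F, (og', c) ∈ Γ.incoming og ∧
      g = encode3 (Fintype.card κ) Γ.numGates (.inl (.inr og)) ∧
      p.1 = encode3 (Fintype.card κ) Γ.numGates (.inl (.inr og'))) := by
  have hg := (encode3_decode3 (Fintype.card κ) Γ.numGates g).symm
  rcases hd : decode3 (Fintype.card κ) Γ.numGates g with (j | og) | u
  · rw [hd] at hg
    rw [hg] at hp
    have : (Γ.subst σ).incoming (encode3 (Fintype.card κ) Γ.numGates (.inl (.inl j))) = [] := by
      exact ((Γ.subst σ).leaf_iff _).2 (by rw [subst_label_leaf]; trivial)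
    rw [this] at hp
    simp at hp
  · rw [hd] at hg
    rw [hg, subst_incoming_old] at hp
    rcases hl : Γ.label og with i | c | - | - <;> rw [hl] at hp <;> dsimp only at hp
    · rcases hs : σ i with c | L <;> rw [hs] at hp <;> dsimp only at hp
      · simp at hp
      · left
        simp only [List.mem_map, List.mem_finRange] at hp
        obtain ⟨j, -, rfl⟩ := hp
        exact ⟨j, rfl⟩
    · simp at hp
    · right
      simp only [List.mem_map] at hp
      obtain ⟨q, hq, rfl⟩ := hp
      exact ⟨q.1, og, q.2, hq, hg, rfl⟩
    · right
      simp only [List.mem_map] at hp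
      obtain ⟨q, hq, rfl⟩ := hp
      exact ⟨q.1, og, q.2, hq, hg, rfl⟩
  · rw [hd] at hg
    cases u
    rw [hg, subst_incoming_last] at hp
    left
    replace hp := List.mem_map.1 hp
    obtain ⟨j, -, rfl⟩ := hp
    exact ⟨j, rfl⟩

theorem encode3_inj {K N : ℕ} : Function.Injective (encode3 K N) :=
  Function.LeftInverse.injective (decode3_encode3 K N)

theorem subst_output_old_iff (og : Fin Γ.numGates) :
    (Γ.subst σ).IsOutputGate (encode3 (Fintype.card κ) Γ.numGates (.inl (.inr og))) ↔
      Γ.IsOutputGate og := by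
  constructor
  · intro h og' q hq
    intro hqe
    -- q ∈ Γ.incoming og' with q.1 = og; build corresponding new edge
    have hl : Γ.label og' = GateLabel.sum ∨ Γ.label og' = GateLabel.prod := by
      rcases hll : Γ.label og' with i | c | - | -
      · exfalso
        have : Γ.incoming og' = [] := (Γ.leaf_iff og').2 (by rw [hll]; trivial)
        rw [this] at hq; simp at hq
      · exfalso
        have : Γ.incoming og' = [] := (Γ.leaf_iff og').2 (by rw [hll]; trivial)
        rw [this] at hq; simp at hq
      · left; rfl
      · right; rfl
    have hmem : (encode3 (Fintype.card κ) Γ.numGates (.inl (.inr q.1)), q.2) ∈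
        (Γ.subst σ).incoming (encode3 (Fintype.card κ) Γ.numGates (.inl (.inr og'))) := by
      rw [subst_incoming_old]
      rcases hl with hl | hl <;> rw [hl] <;> dsimp only <;>
        exact List.mem_map.2 ⟨q, hq, rfl⟩
    have := h _ _ hmem
    simp only [ne_eq] at this
    exact this (by rw [hqe])
  · intro h g' p hp
    intro hpe
    rcases subst_mem_incoming Γ σ g' p hp with ⟨j, hj⟩ | ⟨og', og2, c, hq, hg', hp1⟩
    · rw [hpe] at hj
      have := encode3_inj hj.symm
      simp at this
    · rw [hpe] at hp1
      have := encode3_inj hp1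
      simp only [Sum.inl.injEq, Sum.inr.injEq] at this
      exact h og2 (og', c) hq (by simpa using this.symm)

theorem subst_output_last :
    (Γ.subst σ).IsOutputGate (encode3 (Fintype.card κ) Γ.numGates (.inr ())) := by
  intro g' p hp hpe
  have hlt := (Γ.subst σ).topo g' p hp
  have hval : (p.1 : ℕ) = Fintype.card κ + Γ.numGates := by rw [hpe, encode3_val]
  have := g'.isLt
  have : ((g' : Fin ((Γ.subst σ).numGates)) : ℕ) < Fintype.card κ + Γ.numGates + 1 := g'.isLt
  omega

theorem subst_not_output_leaf (j : Fin (Fintype.card κ)) :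
    ¬ (Γ.subst σ).IsOutputGate (encode3 (Fintype.card κ) Γ.numGates (.inl (.inl j))) := by
  intro h
  have hmem : (encode3 (Fintype.card κ) Γ.numGates (.inl (.inl j)), (0 : F)) ∈
      (Γ.subst σ).incoming (encode3 (Fintype.card κ) Γ.numGates (.inr ())) := by
    rw [subst_incoming_last]
    exact List.mem_map.2 ⟨j, List.mem_finRange j, rfl⟩
  exact h _ _ hmem rfl

theorem subst_outputs_set :
    {f | f ∈ (Γ.subst σ).outputs} =
      (MvPolynomial.aeval (fun i => sPoly (σ i))) '' {f | f ∈ Γ.outputs} ∪ {0} := by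
  ext f
  simp only [Set.mem_setOf_eq, Circuit.mem_outputs_iff, Set.mem_union, Set.mem_image,
    Set.mem_singleton_iff]
  constructor
  · rintro ⟨g, hout, rfl⟩
    have hg := (encode3_decode3 (Fintype.card κ) Γ.numGates g).symm
    rcases hd : decode3 (Fintype.card κ) Γ.numGates g with (j | og) | u <;> rw [hd] at hg
    · exact absurd (hg ▸ hout) (subst_not_output_leaf Γ σ j)
    · left
      refine ⟨Γ.eval og, ⟨og, (subst_output_old_iff Γ σ og).1 (hg ▸ hout), rfl⟩, ?_⟩
      rw [hg, subst_eval_old]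
    · right
      cases u
      rw [hg, subst_eval_last]
  · rintro (⟨f0, ⟨og, hog, rfl⟩, rfl⟩ | rfl)
    · exact ⟨_, (subst_output_old_iff Γ σ og).2 hog, (subst_eval_old Γ σ og)⟩
    · exact ⟨_, subst_output_last Γ σ, subst_eval_last Γ σ⟩

theorem subst_size_le :
    (Γ.subst σ).size ≤ Fintype.card κ * (Γ.numGates + 1) + Γ.size := by
  have hb : Function.Bijective (encode3 (Fintype.card κ) Γ.numGates) := by
    rw [Fintype.bijective_iff_injective_and_card]
    exact ⟨encode3_inj, by simp⟩
  refine le_trans (le_of_eq (Fintype.sum_bijective _ hb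
    (fun x => ((Γ.subst σ).incoming (encode3 (Fintype.card κ) Γ.numGates x)).length)
    (fun g => ((Γ.subst σ).incoming g).length) (fun x => rfl)).symm) ?_
  rw [Fintype.sum_sum_type, Fintype.sum_sum_type]
  have h1 : ∀ j : Fin (Fintype.card κ),
      ((Γ.subst σ).incoming (encode3 (Fintype.card κ) Γ.numGates (.inl (.inl j)))).length
        = 0 := by
    intro j
    rw [((Γ.subst σ).leaf_iff (encode3 (Fintype.card κ) Γ.numGates (.inl (.inl j)))).2 (by rw [subst_label_leaf]; trivial)]
    rfl
  have h2 : ∀ og : Fin Γ.numGates,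
      ((Γ.subst σ).incoming (encode3 (Fintype.card κ) Γ.numGates (.inl (.inr og)))).length
        ≤ Fintype.card κ + (Γ.incoming og).length := by
    intro og
    rw [subst_incoming_old]
    rcases hl : Γ.label og with i | c | - | - <;> dsimp only
    · rcases hs : σ i with c | L <;> dsimp only <;> simp
    · simp
    · simp
    · simp
  have h3 : ((Γ.subst σ).incoming
      (encode3 (Fintype.card κ) Γ.numGates (.inr ()))).length = Fintype.card κ := by
    rw [subst_incoming_last]
    exact (List.length_map ..).trans (List.length_finRange ..)
  calc (∑ j : Fin (Fintype.card κ),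
        ((Γ.subst σ).incoming (encode3 (Fintype.card κ) Γ.numGates (.inl (.inl j)))).length)
        + (∑ og : Fin Γ.numGates,
          ((Γ.subst σ).incoming (encode3 (Fintype.card κ) Γ.numGates (.inl (.inr og)))).length)
        + (∑ u : Unit,
          ((Γ.subst σ).incoming (encode3 (Fintype.card κ) Γ.numGates (.inr u))).length)
      ≤ 0 + (∑ og : Fin Γ.numGates, (Fintype.card κ + (Γ.incoming og).length))
        + Fintype.card κ := by
        gcongr ?a + ?b + ?c
        · exact le_of_eq (Finset.sum_eq_zero fun j _ => h1 j)
        · exact Finset.sum_le_sum fun og _ => h2 og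
        · refine le_of_eq ?_
          rw [Finset.sum_eq_single_of_mem () (Finset.mem_univ ()) (by intros; simp_all)]
          exact h3
    _ = Fintype.card κ * (Γ.numGates + 1) + Γ.size := by
        rw [Finset.sum_add_distrib, Finset.sum_const, Finset.card_univ, Fintype.card_fin]
        rw [Circuit.size]
        ring

end SubstOut

section SubstHom
open MvPolynomial

variable {F : Type u} {ι : Type v} {κ : Type*} [CommSemiring F] [Fintype κ] [DecidableEq κ]

variable (Γ : Circuit F ι) (σ : ι → F ⊕ (κ → F))

theorem subst_multiHom {M M' : Type*} [AddCommMonoid M] [AddCommMonoid M'] (φ : M →+ M')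
    {w : ι → M} {w' : κ → M'}
    (hσ : ∀ i, (sPoly (σ i)).IsWeightedHomogeneous w' (φ (w i)))
    (hΓ : Γ.MultiHom w) : (Γ.subst σ).MultiHom w' := by
  intro g
  have hg := (encode3_decode3 (Fintype.card κ) Γ.numGates g).symm
  rcases hd : decode3 (Fintype.card κ) Γ.numGates g with (j | og) | u <;> rw [hd] at hg
  · rw [hg, subst_eval_leaf]
    exact ⟨w' ((Fintype.equivFin κ).symm j), MvPolynomial.isWeightedHomogeneous_X F w' _⟩
  · obtain ⟨d, hdhom⟩ := hΓ og
    rw [hg, subst_eval_old]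
    exact ⟨φ d, MvPolynomial.IsWeightedHomogeneous.aeval_comp φ _ hσ hdhom⟩
  · cases u
    rw [hg, subst_eval_last]
    exact ⟨0, MvPolynomial.isWeightedHomogeneous_zero F w' 0⟩

theorem subst_outputs_degree_le (D : ℕ) (hD : ∀ f ∈ Γ.outputs, f.totalDegree ≤ D) :
    ∀ f ∈ (Γ.subst σ).outputs, f.totalDegree ≤ D := by
  intro f hf
  have : f ∈ {f | f ∈ (Γ.subst σ).outputs} := hf
  rw [subst_outputs_set] at this
  rcases this with ⟨f0, hf0, rfl⟩ | rfl
  · exact le_trans (totalDegree_aeval_le_of_le_one _ (fun i => totalDegree_sPoly_le _) f0)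
      (hD f0 hf0)
  · simp

theorem subst_card_outputs_le :
    Multiset.card (Γ.subst σ).outputs ≤ Fintype.card κ + Γ.numGates + 1 :=
  (Γ.subst σ).card_outputs_le

end SubstHom

section PolyB

theorem PolyBounded.zero : PolyBounded (fun _ => 0) := ⟨0, 0, fun n => by simp⟩

theorem PolyBounded.const (a : ℕ) : PolyBounded (fun _ => a) :=
  ⟨a, 0, fun n => by simp⟩

theorem PolyBounded.mono {f g : ℕ → ℕ} (h : ∀ n, f n ≤ g n) (hg : PolyBounded g) :
    PolyBounded f := by
  obtain ⟨c, k, hck⟩ := hg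
  exact ⟨c, k, fun n => (h n).trans (hck n)⟩

theorem PolyBounded.add {f g : ℕ → ℕ} (hf : PolyBounded f) (hg : PolyBounded g) :
    PolyBounded (fun n => f n + g n) := by
  obtain ⟨c, k, hck⟩ := hf
  obtain ⟨c', k', hck'⟩ := hg
  refine ⟨c + c', max k k', fun n => ?_⟩
  have h1 : f n ≤ c * (n + 1) ^ max k k' :=
    (hck n).trans (Nat.mul_le_mul_left c (Nat.pow_le_pow_right (by omega) (le_max_left _ _)))
  have h2 : g n ≤ c' * (n + 1) ^ max k k' :=
    (hck' n).trans (Nat.mul_le_mul_left c' (Nat.pow_le_pow_right (by omega) (le_max_right _ _)))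
  calc f n + g n ≤ c * (n + 1) ^ max k k' + c' * (n + 1) ^ max k k' := by omega
    _ = (c + c') * (n + 1) ^ max k k' := by ring

theorem PolyBounded.mul {f g : ℕ → ℕ} (hf : PolyBounded f) (hg : PolyBounded g) :
    PolyBounded (fun n => f n * g n) := by
  obtain ⟨c, k, hck⟩ := hf
  obtain ⟨c', k', hck'⟩ := hg
  refine ⟨c * c', k + k', fun n => ?_⟩
  calc f n * g n ≤ (c * (n + 1) ^ k) * (c' * (n + 1) ^ k') :=
        Nat.mul_le_mul (hck n) (hck' n)
    _ = c * c' * (n + 1) ^ (k + k') := by ring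

theorem PolyBounded.comp {f g : ℕ → ℕ} (hf : PolyBounded f) (hg : PolyBounded g) :
    PolyBounded (fun n => f (g n)) := by
  obtain ⟨c, k, hck⟩ := hf
  obtain ⟨c', k', hck'⟩ := hg
  refine ⟨c * (c' + 1) ^ k, k' * k, fun n => ?_⟩
  calc f (g n) ≤ c * (g n + 1) ^ k := hck (g n)
    _ ≤ c * (c' * (n + 1) ^ k' + 1) ^ k := by
        refine Nat.mul_le_mul_left c (Nat.pow_le_pow_left ?_ k)
        have := hck' n
        omega
    _ ≤ c * ((c' + 1) * (n + 1) ^ k') ^ k := by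
        refine Nat.mul_le_mul_left c (Nat.pow_le_pow_left ?_ k)
        have h1 : 1 ≤ (n + 1) ^ k' := Nat.one_le_pow _ _ (by omega)
        calc c' * (n + 1) ^ k' + 1 ≤ c' * (n + 1) ^ k' + (n + 1) ^ k' := by omega
          _ = (c' + 1) * (n + 1) ^ k' := by ring
    _ = c * (c' + 1) ^ k * (n + 1) ^ (k' * k) := by
        rw [mul_pow, ← pow_mul]
        ring

theorem PolyBounded.id : PolyBounded (fun n => n) :=
  ⟨1, 1, fun n => by simp⟩

end PolyB

section Geo
open MvPolynomial Projectivization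

variable {F : Type u} [Field F]

theorem exists_subst_of_projLinComp₂ {a' b' t : ℕ}
    (g : Projectivization F (Fin a' → F) × Projectivization F (Fin b' → F) →
      Projectivization F (Fin t → F)) (hg : IsProjLinComp₂ g) :
    ∃ (σg : Fin t → F ⊕ ((Fin a' ⊕ Fin b') → F)) (e : ℕ × ℕ),
      (∀ j, (sPoly (σg j)).IsWeightedHomogeneous (biWeight a' b') e) ∧
      ∀ (v : Fin a' → F) (w : Fin b' → F) (hv : v ≠ 0) (hw : w ≠ 0),
        ∃ hA : (fun j => MvPolynomial.eval (Sum.elim v w) (sPoly (σg j))) ≠ 0,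
          Projectivization.mk F (fun j => MvPolynomial.eval (Sum.elim v w) (sPoly (σg j))) hA =
            g (Projectivization.mk F v hv, Projectivization.mk F w hw) := by
  rcases hg with ⟨c, hc⟩ | ⟨L, hL, hLe⟩ | ⟨L, hL, hLe⟩
  · -- constant map
    refine ⟨fun j => Sum.inl (c.rep j), 0, fun j => ?_, fun v w hv hw => ?_⟩
    · exact MvPolynomial.isWeightedHomogeneous_C _ _
    · have hfun : (fun j => MvPolynomial.eval (Sum.elim v w)
          (sPoly (Sum.inl (c.rep j) : F ⊕ ((Fin a' ⊕ Fin b') → F)))) = c.rep := by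
        funext j; simp [sPoly]
      rw [hfun]
      exact ⟨c.rep_nonzero, by rw [Projectivization.mk_rep]; exact (hc _).symm⟩
  · -- linear in the first factor
    set L' : Fin t → (Fin a' ⊕ Fin b') → F :=
      fun j => Sum.elim (fun k => L (fun k2 => if k = k2 then 1 else 0) j) (fun _ => 0) with hL'
    refine ⟨fun j => Sum.inr (L' j), (1, 0), fun j => ?_, fun v w hv hw => ?_⟩
    · show (linPoly (L' j)).IsWeightedHomogeneous (biWeight a' b') (1, 0)
      rw [linPoly]
      refine MvPolynomial.IsWeightedHomogeneous.sum _ _ _ fun k _ => ?_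
      rcases k with k1 | k2
      · have := (MvPolynomial.isWeightedHomogeneous_C (biWeight a' b')
          (L' j (Sum.inl k1))).mul (MvPolynomial.isWeightedHomogeneous_X F _ (Sum.inl k1))
        rw [zero_add] at this
        exact this
      · have h0 : L' j (Sum.inr k2) = 0 := rfl
        rw [h0, MvPolynomial.C_0, zero_mul]
        exact MvPolynomial.isWeightedHomogeneous_zero F _ _
    · have hfun : (fun j => MvPolynomial.eval (Sum.elim v w)
          (sPoly (Sum.inr (L' j) : F ⊕ ((Fin a' ⊕ Fin b') → F)))) = L v := by
        funext j
        show MvPolynomial.eval (Sum.elim v w) (linPoly (L' j)) = L v j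
        rw [eval_linPoly, Fintype.sum_sum_type]
        have h2 : ∀ k2 : Fin b', L' j (Sum.inr k2) * Sum.elim v w (Sum.inr k2) = 0 := by
          intro k2; show (0 : F) * _ = 0; ring
        rw [Finset.sum_congr rfl (fun k2 _ => h2 k2), Finset.sum_const, smul_zero, add_zero]
        have := LinearMap.pi_apply_eq_sum_univ L v
        rw [this]
        rw [Finset.sum_apply]
        refine Finset.sum_congr rfl fun k1 _ => ?_
        show L (fun k2 => if k1 = k2 then 1 else 0) j * v k1 = _
        rw [Pi.smul_apply, smul_eq_mul, mul_comm]
      rw [hfun]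
      have hA : L v ≠ 0 := fun h => hv (hL (h.trans (map_zero L).symm))
      refine ⟨hA, ?_⟩
      rw [hLe]
      exact (Projectivization.map_mk L hL v hv).symm
  · -- linear in the second factor
    set L' : Fin t → (Fin a' ⊕ Fin b') → F :=
      fun j => Sum.elim (fun _ => 0) (fun k => L (fun k2 => if k = k2 then 1 else 0) j) with hL'
    refine ⟨fun j => Sum.inr (L' j), (0, 1), fun j => ?_, fun v w hv hw => ?_⟩
    · show (linPoly (L' j)).IsWeightedHomogeneous (biWeight a' b') (0, 1)
      rw [linPoly]
      refine MvPolynomial.IsWeightedHomogeneous.sum _ _ _ fun k _ => ?_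
      rcases k with k1 | k2
      · have h0 : L' j (Sum.inl k1) = 0 := rfl
        rw [h0, MvPolynomial.C_0, zero_mul]
        exact MvPolynomial.isWeightedHomogeneous_zero F _ _
      · have := (MvPolynomial.isWeightedHomogeneous_C (biWeight a' b')
          (L' j (Sum.inr k2))).mul (MvPolynomial.isWeightedHomogeneous_X F _ (Sum.inr k2))
        rw [zero_add] at this
        exact this
    · have hfun : (fun j => MvPolynomial.eval (Sum.elim v w)
          (sPoly (Sum.inr (L' j) : F ⊕ ((Fin a' ⊕ Fin b') → F)))) = L w := by
        funext j
        show MvPolynomial.eval (Sum.elim v w) (linPoly (L' j)) = L w j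
        rw [eval_linPoly, Fintype.sum_sum_type]
        have h1 : ∀ k1 : Fin a', L' j (Sum.inl k1) * Sum.elim v w (Sum.inl k1) = 0 := by
          intro k1; show (0 : F) * _ = 0; ring
        rw [Finset.sum_congr rfl (fun k1 _ => h1 k1), Finset.sum_const, smul_zero, zero_add]
        have := LinearMap.pi_apply_eq_sum_univ L w
        rw [this]
        rw [Finset.sum_apply]
        refine Finset.sum_congr rfl fun k2 _ => ?_
        show L (fun k3 => if k2 = k3 then 1 else 0) j * w k2 = _
        rw [Pi.smul_apply, smul_eq_mul, mul_comm]
      rw [hfun]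
      have hA : L w ≠ 0 := fun h => hw (hL (h.trans (map_zero L).symm))
      refine ⟨hA, ?_⟩
      rw [hLe]
      exact (Projectivization.map_mk L hL w hw).symm

/-- The character used for scaling of bihomogeneous polynomials. -/
noncomputable def biChar (l m : F) : Multiplicative (ℕ × ℕ) →* F where
  toFun d := l ^ (Multiplicative.toAdd d).1 * m ^ (Multiplicative.toAdd d).2
  map_one' := by simp
  map_mul' x y := by
    show l ^ ((Multiplicative.toAdd x).1 + (Multiplicative.toAdd y).1) *
      m ^ ((Multiplicative.toAdd x).2 + (Multiplicative.toAdd y).2) = _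
    rw [pow_add, pow_add]
    ring

end Geo

section Core
open MvPolynomial Projectivization

variable {F : Type u} [Field F]

theorem bi_core {a b a' b' : ℕ}
    (ρ : Projectivization F (Fin a' → F) × Projectivization F (Fin b' → F) →
      Projectivization F (Fin a → F) × Projectivization F (Fin b → F))
    (hρ1 : IsProjLinComp₂ (fun x => (ρ x).1)) (hρ2 : IsProjLinComp₂ (fun x => (ρ x).2))
    (Γ : Circuit F (Fin a ⊕ Fin b)) (hΓ : Γ.BiHom) :
    ∃ Γ' : Circuit F (Fin a' ⊕ Fin b'),
      Γ'.BiHom ∧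
      biZeroSet {f | f ∈ Γ'.outputs} = ρ ⁻¹' (biZeroSet {f | f ∈ Γ.outputs}) ∧
      Γ'.size ≤ (a' + b') * (Γ.numGates + 1) + Γ.size ∧
      Multiset.card Γ'.outputs ≤ (a' + b') + Γ.numGates + 1 ∧
      (∀ D : ℕ, (∀ f ∈ Γ.outputs, f.totalDegree ≤ D) →
        ∀ f ∈ Γ'.outputs, f.totalDegree ≤ D) := by
  obtain ⟨σ1, e1, hhom1, happ1⟩ := exists_subst_of_projLinComp₂ _ hρ1
  obtain ⟨σ2, e2, hhom2, happ2⟩ := exists_subst_of_projLinComp₂ _ hρ2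
  set σ : (Fin a ⊕ Fin b) → F ⊕ ((Fin a' ⊕ Fin b') → F) := Sum.elim σ1 σ2 with hσdef
  have hcardκ : Fintype.card (Fin a' ⊕ Fin b') = a' + b' := by simp
  -- the comparison of evaluations
  have hcomp : ∀ (v : Fin a' → F) (w : Fin b' → F) (f : MvPolynomial (Fin a ⊕ Fin b) F),
      MvPolynomial.eval (Sum.elim (fun j => MvPolynomial.eval (Sum.elim v w) (sPoly (σ1 j)))
        (fun j => MvPolynomial.eval (Sum.elim v w) (sPoly (σ2 j)))) f =
      MvPolynomial.eval (Sum.elim v w) (MvPolynomial.aeval (fun i => sPoly (σ i)) f) := by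
    intro v w f
    have h1 : MvPolynomial.aeval (fun i => sPoly (σ i)) f =
        MvPolynomial.eval₂ MvPolynomial.C (fun i => sPoly (σ i)) f := by
      rw [MvPolynomial.aeval_def, MvPolynomial.algebraMap_eq]
    have h2 : (Sum.elim (fun j => MvPolynomial.eval (Sum.elim v w) (sPoly (σ1 j)))
        (fun j => MvPolynomial.eval (Sum.elim v w) (sPoly (σ2 j)))) =
        (⇑(MvPolynomial.eval (Sum.elim v w)) ∘ fun i => sPoly (σ i)) := by
      funext i; rcases i with j | j <;> rfl
    rw [h1, ← MvPolynomial.eval_assoc, h2]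
  refine ⟨Γ.subst σ, ?_, ?_, ?_, ?_, ?_⟩
  · -- BiHom
    have φmap : ∀ d : ℕ × ℕ, d.1 • e1 + d.2 • e2 = d.1 • e1 + d.2 • e2 := fun _ => rfl
    refine subst_multiHom Γ σ
      { toFun := fun d => d.1 • e1 + d.2 • e2
        map_zero' := by simp
        map_add' := by
          intro x y
          simp only [Prod.fst_add, Prod.snd_add, add_nsmul]
          abel } ?_ hΓ
    intro i
    rcases i with j | j
    · have he : (1, 0).1 • e1 + ((1, 0) : ℕ × ℕ).2 • e2 = e1 := by simp
      show (sPoly (σ1 j)).IsWeightedHomogeneous _ _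
      simp only [AddMonoidHom.coe_mk, ZeroHom.coe_mk]
      rw [show biWeight a b (Sum.inl j) = (1, 0) from rfl, he]
      exact hhom1 j
    · have he : ((0, 1) : ℕ × ℕ).1 • e1 + ((0, 1) : ℕ × ℕ).2 • e2 = e2 := by simp
      show (sPoly (σ2 j)).IsWeightedHomogeneous _ _
      simp only [AddMonoidHom.coe_mk, ZeroHom.coe_mk]
      rw [show biWeight a b (Sum.inr j) = (0, 1) from rfl, he]
      exact hhom2 j
  · -- zero set
    rw [subst_outputs_set]
    ext x
    simp only [biZeroSet, Set.mem_setOf_eq, Set.mem_preimage]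
    constructor
    · intro hx f hf
      intro A' B' hA' hB' hmkA hmkB
      obtain ⟨gg, hgout, rfl⟩ := (Γ.mem_outputs_iff f).1 hf
      obtain ⟨d, hd⟩ := hΓ gg
      obtain ⟨hA, hmk1⟩ := happ1 x.1.rep x.2.rep x.1.rep_nonzero x.2.rep_nonzero
      obtain ⟨hB, hmk2⟩ := happ2 x.1.rep x.2.rep x.1.rep_nonzero x.2.rep_nonzero
      have hxx : (Projectivization.mk F x.1.rep x.1.rep_nonzero,
          Projectivization.mk F x.2.rep x.2.rep_nonzero) = x := by
        rw [Projectivization.mk_rep, Projectivization.mk_rep]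
      rw [hxx] at hmk1 hmk2
      obtain ⟨uA, huA⟩ := (Projectivization.mk_eq_mk_iff F _ _ hA' hA).1 (hmkA.trans hmk1.symm)
      obtain ⟨uB, huB⟩ := (Projectivization.mk_eq_mk_iff F _ _ hB' hB).1 (hmkB.trans hmk2.symm)
      have hfun : Sum.elim A' B' = fun i =>
          (biChar ((uA : F)) ((uB : F))) (Multiplicative.ofAdd (biWeight a b i)) *
            Sum.elim (fun j => MvPolynomial.eval (Sum.elim x.1.rep x.2.rep) (sPoly (σ1 j)))
              (fun j => MvPolynomial.eval (Sum.elim x.1.rep x.2.rep) (sPoly (σ2 j))) i := by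
        funext i
        rcases i with j | j
        · show A' j = (biChar _ _) (Multiplicative.ofAdd ((1, 0) : ℕ × ℕ)) * _
          rw [← huA]
          show (uA : F) * _ = _
          congr 1
          show _ = (uA : F) ^ 1 * (uB : F) ^ 0
          rw [pow_one, pow_zero, mul_one]
        · show B' j = (biChar _ _) (Multiplicative.ofAdd ((0, 1) : ℕ × ℕ)) * _
          rw [← huB]
          show (uB : F) * _ = _
          congr 1
          show _ = (uA : F) ^ 0 * (uB : F) ^ 1
          rw [pow_one, pow_zero, one_mul]
      rw [hfun, hd.eval_scale (biChar ((uA : F)) ((uB : F))) _, hcomp]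
      have hmem : (MvPolynomial.aeval (fun i => sPoly (σ i))) (Γ.eval gg) ∈
          (MvPolynomial.aeval (fun i => sPoly (σ i))) '' {f | f ∈ Γ.outputs} ∪ {0} :=
        Set.mem_union_left _ ⟨Γ.eval gg, hf, rfl⟩
      have := hx _ hmem x.1.rep x.2.rep x.1.rep_nonzero x.2.rep_nonzero
        (Projectivization.mk_rep _) (Projectivization.mk_rep _)
      rw [this, mul_zero]
    · intro hx h hh
      rcases hh with ⟨f, hf, rfl⟩ | rfl
      · intro v w hv hw hmkv hmkw
        obtain ⟨hA, hmk1⟩ := happ1 v w hv hw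
        obtain ⟨hB, hmk2⟩ := happ2 v w hv hw
        have hxx : (Projectivization.mk F v hv, Projectivization.mk F w hw) = x :=
          Prod.ext hmkv hmkw
        rw [hxx] at hmk1 hmk2
        rw [← hcomp]
        exact hx f hf _ _ hA hB hmk1 hmk2
      · intro v w hv hw hmkv hmkw
        rw [map_zero]
  · -- size
    refine le_trans (subst_size_le Γ σ) ?_
    rw [hcardκ]
  · -- number of outputs
    refine le_trans (subst_card_outputs_le Γ σ) ?_
    rw [hcardκ]
  · -- degrees
    intro D hD
    exact subst_outputs_degree_le Γ σ D hD

end Core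

theorem Pproj_NPproj_closed_under_reductions_aux (F : Type u) [Field F] :
    (∀ X Y : BiSeq F, PolyBounded X.c1 → PolyBounded X.c2 →
      X.Reduces Y → Y.InPproj → X.InPproj) ∧
    (∀ X Y : PSeq F, PolyBounded X.c1 →
      X.Reduces Y → Y.InNPproj → X.InNPproj) := by
  have part1 : ∀ X Y : BiSeq F, PolyBounded X.c1 → PolyBounded X.c2 →
      X.Reduces Y → Y.InPproj → X.InPproj := by
    intro X Y hc1 hc2 hred hY
    obtain ⟨p, hp, ρ, hρ, hXρ⟩ := hred
    obtain ⟨hYc1, hYc2, Γ, hsize, hcard, ⟨D, hD, hDdeg⟩, hbihom, hzero⟩ := hY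
    have H := fun n => bi_core (ρ n) (hρ n).1 (hρ n).2 (Γ (p n)) (hbihom (p n))
    choose Γ' h1 h2 h3 h4 h5 using H
    -- polynomial bounds on numGates of Γ (p n)
    have hng : PolyBounded (fun n => (Γ (p n)).numGates) := by
      refine PolyBounded.mono (fun n => (Γ (p n)).numGates_le) ?_
      exact ((PolyBounded.const 2).mul (hsize.comp hp)).add (hcard.comp hp)
    refine ⟨hc1, hc2, Γ', ?_, ?_,
      ⟨fun n => D (p n), hD.comp hp, fun n => h5 n (D (p n)) (hDdeg (p n))⟩, h1, ?_⟩
    · refine PolyBounded.mono (fun n => h3 n) ?_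
      exact ((hc1.add hc2).mul (hng.add (PolyBounded.const 1))).add (hsize.comp hp)
    · refine PolyBounded.mono (fun n => h4 n) ?_
      exact ((hc1.add hc2).add hng).add (PolyBounded.const 1)
    · intro n
      rw [h2 n, hzero (p n), ← hXρ n]
  refine ⟨part1, ?_⟩
  intro X Y hc1 hred hY
  obtain ⟨p, hp, ρ, hρ, hXρ⟩ := hred
  obtain ⟨c2, Z, hZP, hYZ⟩ := hY
  refine ⟨fun n => c2 (p n),
    fun n => (fun q : Projectivization F (Fin (X.c1 n) → F) ×
      Projectivization F (Fin (c2 (p n)) → F) => (ρ n q.1, q.2)) ⁻¹' Z (p n), ?_, ?_⟩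
  · refine part1 ⟨X.c1, fun n => c2 (p n), _⟩ ⟨Y.c1, c2, Z⟩ hc1 (hZP.2.1.comp hp) ?_ hZP
    refine ⟨p, hp, fun n q => (ρ n q.1, q.2), ?_, fun n => rfl⟩
    intro n
    constructor
    · rcases hρ n with ⟨cst, hcst⟩ | ⟨L, hL, hLe⟩
      · exact Or.inl ⟨cst, fun q => hcst q.1⟩
      · exact Or.inr (Or.inl ⟨L, hL, fun q => hLe q.1⟩)
    · refine Or.inr (Or.inr ⟨LinearMap.id,
        (LinearEquiv.refl F (Fin (c2 (p n)) → F)).injective, fun q => ?_⟩)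
      exact (congrFun Projectivization.map_id q.2).symm
  · intro n
    rw [hXρ n, hYZ (p n)]
    ext x
    simp only [Set.mem_preimage, Set.mem_image]
    constructor
    · rintro ⟨z, hz, hz1⟩
      refine ⟨(x, z.2), ?_, rfl⟩
      show (ρ n x, z.2) ∈ Z (p n)
      rw [show (ρ n x, z.2) = z from Prod.ext hz1.symm rfl]
      exact hz
    · rintro ⟨q, hq, rfl⟩
      exact ⟨(ρ n q.1, q.2), hq, rfl⟩

/-- **`P_proj` and `NP_proj` are closed under reductions**: if a sequence of bi-projective
varieties (with polynomially bounded dimensions) reduces to a sequence in `P_proj`, it is in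
`P_proj`; and if a sequence of projective varieties (with polynomially bounded dimension)
reduces to a sequence in `NP_proj`, it is in `NP_proj`. -/
theorem Pproj_NPproj_closed_under_reductions (F : Type u) [Field F] :
    (∀ X Y : BiSeq F, PolyBounded X.c1 → PolyBounded X.c2 →
      X.Reduces Y → Y.InPproj → X.InPproj) ∧
    (∀ X Y : PSeq F, PolyBounded X.c1 →
      X.Reduces Y → Y.InNPproj → X.InNPproj) :=
  Pproj_NPproj_closed_under_reductions_aux F
end

section
/- Fix a degree d ≥ 1 and a field F. For each n let N(n) = (n+1)·binom(n+d, d) − 1 and let Res_{d,n} ⊆ P^{N(n)}(F) be the resultant variety: the set of points corresponding to nonzero tuples (f_0,…,f_n) of degree-d forms in the variables x_0,…,x_n that have a common nonzero solution, i.e., Res_{d,n} = π_1(Z_{d,n}) where Z_{d,n} ⊆ P^{N(n)} × P^n is the incidence variety of pairs ((f_0,…,f_n), [x]) with f_i(x) = 0 for all i and π_1 is the projection to the first factor. Then the sequence (Res_{d,n})_n is in NP_proj. -/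
universe u v

variable {F : Type u} [Field F]

namespace ResNPAux

open MvPolynomial

/-! ### Polynomial boundedness helpers -/

theorem polyBounded_const (c : ℕ) : PolyBounded (fun _ => c) :=
  ⟨c, 0, fun n => by simp⟩

theorem polyBounded_succ : PolyBounded (fun n => n + 1) :=
  ⟨1, 1, fun n => by simp⟩

theorem polyBounded_of_le {f g : ℕ → ℕ} (h : ∀ n, f n ≤ g n) (hg : PolyBounded g) :
    PolyBounded f := by
  obtain ⟨c, k, hc⟩ := hg
  exact ⟨c, k, fun n => (h n).trans (hc n)⟩

theorem polyBounded_mul {f g : ℕ → ℕ} (hf : PolyBounded f) (hg : PolyBounded g) :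
    PolyBounded (fun n => f n * g n) := by
  obtain ⟨c, k, hc⟩ := hf
  obtain ⟨c', k', hc'⟩ := hg
  refine ⟨c * c', k + k', fun n => ?_⟩
  calc f n * g n ≤ (c * (n+1)^k) * (c' * (n+1)^k') := Nat.mul_le_mul (hc n) (hc' n)
    _ = c * c' * (n+1)^(k+k') := by ring

theorem polyBounded_add {f g : ℕ → ℕ} (hf : PolyBounded f) (hg : PolyBounded g) :
    PolyBounded (fun n => f n + g n) := by
  obtain ⟨c, k, hc⟩ := hf
  obtain ⟨c', k', hc'⟩ := hg
  refine ⟨c + c', max k k', fun n => ?_⟩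
  have h1 : (n+1)^k ≤ (n+1)^(max k k') := Nat.pow_le_pow_right (by omega) (le_max_left _ _)
  have h2 : (n+1)^k' ≤ (n+1)^(max k k') := Nat.pow_le_pow_right (by omega) (le_max_right _ _)
  calc f n + g n ≤ c * (n+1)^k + c' * (n+1)^k' := Nat.add_le_add (hc n) (hc' n)
    _ ≤ c * (n+1)^(max k k') + c' * (n+1)^(max k k') :=
      Nat.add_le_add (Nat.mul_le_mul_left _ h1) (Nat.mul_le_mul_left _ h2)
    _ = (c + c') * (n+1)^(max k k') := by ring

theorem polyBounded_choose (d : ℕ) : PolyBounded (fun n => (n + d).choose d) := by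
  refine ⟨(d+1)^d, d, fun n => ?_⟩
  calc (n + d).choose d ≤ (n + d) ^ d := Nat.choose_le_pow _ _
    _ ≤ ((d + 1) * (n + 1)) ^ d := Nat.pow_le_pow_left (by nlinarith) _
    _ = (d + 1) ^ d * (n + 1) ^ d := mul_pow _ _ _

/-! ### The monomial equivalence -/

noncomputable def symEquiv (m d : ℕ) :
    {M : Fin m →₀ ℕ // (M.sum fun _ k => k) = d} ≃ Sym (Fin m) d where
  toFun M := ⟨Finsupp.toMultiset M.1, by rw [Finsupp.card_toMultiset]; exact M.2⟩
  invFun s := ⟨Multiset.toFinsupp s.1, by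
    have h2 := Finsupp.card_toMultiset (Multiset.toFinsupp s.1)
    rw [Multiset.toFinsupp_toMultiset] at h2
    exact h2.symm.trans s.2⟩
  left_inv M := Subtype.ext (Finsupp.toMultiset_toFinsupp M.1)
  right_inv s := Subtype.ext (Multiset.toFinsupp_toMultiset s.1)

noncomputable def monEquiv (n d : ℕ) :
    Fin ((n + d).choose d) ≃ {M : Fin (n + 1) →₀ ℕ // (M.sum fun _ k => k) = d} :=
  ((symEquiv (n+1) d).trans (Fintype.equivFinOfCardEq (by
    rw [Sym.card_sym_eq_multichoose, Fintype.card_fin, Nat.multichoose_eq]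
    congr 1
    omega))).symm

/-! ### Generic circuit evaluation lemmas -/

theorem eval_input' {F : Type u} [Field F] {ι : Type v} (Γ : Circuit F ι) (g) (v)
    (h : Γ.label g = .input v) : Γ.eval g = X v := by
  rw [Circuit.eval, h]

theorem eval_sum' {F : Type u} [Field F] {ι : Type v} (Γ : Circuit F ι) (g)
    (h : Γ.label g = .sum) :
    Γ.eval g = ((Γ.incoming g).map (fun p => C p.2 * Γ.eval p.1)).sum := by
  rw [Circuit.eval, h]
  dsimp only
  exact congrArg List.sum (List.attach_map_val (f := fun p : Fin Γ.numGates × F => C p.2 * Γ.eval p.1))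

theorem eval_prod' {F : Type u} [Field F] {ι : Type v} (Γ : Circuit F ι) (g)
    (h : Γ.label g = .prod) :
    Γ.eval g = ((Γ.incoming g).map (fun p => C p.2 * Γ.eval p.1)).prod := by
  rw [Circuit.eval, h]
  dsimp only
  exact congrArg List.prod (List.attach_map_val (f := fun p : Fin Γ.numGates × F => C p.2 * Γ.eval p.1))

/-! ### Products of variables and monomials -/

theorem multiset_prod_X {F : Type u} [Field F] {σ τ : Type} (f : σ → τ)
    (hf : Function.Injective f) (M : σ →₀ ℕ) :
    ((Finsupp.toMultiset M).map (fun j => (X (f j) : MvPolynomial τ F))).prod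
      = monomial (M.mapDomain f) 1 := by
  rw [monomial_eq, map_one, one_mul, Finsupp.prod_mapDomain_index_inj hf,
    Finsupp.toMultiset_map, Finsupp.prod_toMultiset,
    Finsupp.prod_mapDomain_index_inj (f := fun j => (X (f j) : MvPolynomial τ F))
      (fun a b hab => hf (X_injective hab))]

/-! ### Sizes -/

abbrev rA (n d : ℕ) : ℕ := (n + 1) * (n + d).choose d
abbrev rN (n d : ℕ) : ℕ := rA n d * (d + 2) + (n + 1)

theorem div_lt_rA {n d g : ℕ} (h : g < rA n d * (d + 2)) : g / (d + 2) < rA n d :=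
  Nat.div_lt_of_lt_mul (by rw [Nat.mul_comm]; exact h)

/-! ### Gates -/

def blockGate {n d : ℕ} (t : Fin (rA n d)) (s : Fin (d + 2)) : Fin (rN n d) :=
  ⟨t.1 * (d + 2) + s.1, by
    have hs := s.isLt
    have ht := t.isLt
    have h1 : (t.1 + 1) * (d + 2) ≤ rA n d * (d + 2) := Nat.mul_le_mul_right _ ht
    have h2 : (t.1 + 1) * (d + 2) = t.1 * (d + 2) + (d + 2) := by ring
    simp only [rN]
    omega⟩

def sumGate {n d : ℕ} (i : Fin (n + 1)) : Fin (rN n d) :=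
  ⟨rA n d * (d + 2) + i.1, by have := i.isLt; simp only [rN]; omega⟩

theorem blockGate_lt {n d : ℕ} (t : Fin (rA n d)) (s : Fin (d + 2)) :
    ((blockGate t s : Fin (rN n d)) : ℕ) < rA n d * (d + 2) := by
  have hs := s.isLt
  have ht := t.isLt
  have h1 : (t.1 + 1) * (d + 2) ≤ rA n d * (d + 2) := Nat.mul_le_mul_right _ ht
  have h2 : (t.1 + 1) * (d + 2) = t.1 * (d + 2) + (d + 2) := by ring
  simp only [blockGate]
  omega

theorem blockGate_mod {n d : ℕ} (t : Fin (rA n d)) (s : Fin (d + 2)) :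
    ((blockGate t s : Fin (rN n d)) : ℕ) % (d + 2) = s.1 := by
  simp only [blockGate]
  rw [Nat.mul_comm (t.1) (d + 2), Nat.mul_add_mod, Nat.mod_eq_of_lt s.isLt]

theorem blockGate_div {n d : ℕ} (t : Fin (rA n d)) (s : Fin (d + 2)) :
    ((blockGate t s : Fin (rN n d)) : ℕ) / (d + 2) = t.1 := by
  simp only [blockGate]
  rw [Nat.mul_comm t.1 (d+2), Nat.mul_add_div (by omega), Nat.div_eq_of_lt s.isLt, Nat.add_zero]

theorem sumGate_val {n d : ℕ} (i : Fin (n + 1)) :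
    ((sumGate i : Fin (rN n d)) : ℕ) = rA n d * (d + 2) + i.1 := rfl

/-! ### The monomial list -/

noncomputable def mList {n d : ℕ}
    (e : Fin ((n + d).choose d) ≃ {M : Fin (n + 1) →₀ ℕ // (M.sum fun _ k => k) = d})
    (t : Fin (rA n d)) : List (Fin (n + 1)) :=
  (Finsupp.toMultiset ((e (finProdFinEquiv.symm t).2).1)).toList

theorem length_mList {n d : ℕ} (e) (t : Fin (rA n d)) : (mList (n := n) (d := d) e t).length = d := by
  simp only [mList, Multiset.length_toList, Finsupp.card_toMultiset]
  exact (e (finProdFinEquiv.symm t).2).2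

/-! ### Label and incoming functions -/

variable (F : Type u) [Field F]

noncomputable def rLabel (n d : ℕ)
    (e : Fin ((n + d).choose d) ≃ {M : Fin (n + 1) →₀ ℕ // (M.sum fun _ k => k) = d})
    (g : Fin (rN n d)) : GateLabel F (Fin (rA n d) ⊕ Fin (n + 1)) :=
  if h : (g : ℕ) < rA n d * (d + 2) then
    if (g : ℕ) % (d + 2) = 0 then
      .input (.inl ⟨(g : ℕ) / (d + 2), div_lt_rA h⟩)
    else if (g : ℕ) % (d + 2) = d + 1 then .prod
    else .input (.inr ((mList e ⟨(g : ℕ) / (d + 2), div_lt_rA h⟩).getD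
      ((g : ℕ) % (d + 2) - 1) 0))
  else .sum

noncomputable def rIncoming (n d : ℕ) (g : Fin (rN n d)) : List (Fin (rN n d) × F) :=
  if h : (g : ℕ) < rA n d * (d + 2) then
    if (g : ℕ) % (d + 2) = d + 1 then
      (List.finRange (d + 1)).map (fun s =>
        (blockGate ⟨(g : ℕ) / (d + 2), div_lt_rA h⟩ s.castSucc, (1 : F)))
    else []
  else
    (List.finRange ((n + d).choose d)).map (fun k =>
      (blockGate (finProdFinEquiv (⟨(g : ℕ) - rA n d * (d + 2), by
          have hg := g.isLt; simp only [rN] at hg; omega⟩, k)) ⟨d + 1, by omega⟩, (1 : F)))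

end ResNPAux
namespace ResNPAux

open MvPolynomial

variable (F : Type u) [Field F]

/-! ### The circuit -/

@[reducible] noncomputable def resCircuit (n d : ℕ)
    (e : Fin ((n + d).choose d) ≃ {M : Fin (n + 1) →₀ ℕ // (M.sum fun _ k => k) = d}) :
    Circuit F (Fin (rA n d) ⊕ Fin (n + 1)) where
  numGates := rN n d
  label := rLabel F n d e
  incoming := rIncoming F n d
  topo := by
    intro g p hp
    unfold rIncoming at hp
    split_ifs at hp with h h1
    · -- product gate
      simp only [List.mem_map] at hp
      obtain ⟨s, -, rfl⟩ := hp
      have hs := s.isLt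
      have hdm := Nat.div_add_mod (g : ℕ) (d + 2)
      have hcomm : (d + 2) * ((g : ℕ) / (d + 2)) = ((g : ℕ) / (d + 2)) * (d + 2) :=
        Nat.mul_comm _ _
      have hcs : ((s.castSucc : Fin (d + 2)) : ℕ) = s.1 := rfl
      dsimp only [blockGate]
      omega
    · simp at hp
    · -- sum gate
      simp only [List.mem_map] at hp
      obtain ⟨k, -, rfl⟩ := hp
      dsimp only
      exact lt_of_lt_of_le (blockGate_lt _ _) (le_of_not_gt h)
  leaf_iff := by
    intro g
    have hC : 0 < (n + d).choose d := Nat.choose_pos (Nat.le_add_left d n)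
    unfold rIncoming rLabel
    split_ifs with h h1 h0
    · -- impossible: g % (d+2) = d+1 and = 0
      exfalso
      omega
    · -- product gate
      simp only [GateLabel.isLeaf, iff_false]
      intro hnil
      have hlen := congrArg List.length hnil
      simp at hlen
    · -- leaf at position 0
      simp [GateLabel.isLeaf]
    · -- leaf at positive position
      simp [GateLabel.isLeaf]
    · -- sum gate
      simp only [GateLabel.isLeaf, iff_false]
      intro hnil
      have hlen := congrArg List.length hnil
      simp at hlen
      omega

@[simp] theorem resCircuit_label (n d e) :
    (resCircuit F n d e).label = rLabel F n d e := rfl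

@[simp] theorem resCircuit_incoming (n d e) :
    (resCircuit F n d e).incoming = rIncoming F n d := rfl

@[simp] theorem resCircuit_numGates (n d e) :
    (resCircuit F n d e).numGates = rN n d := rfl

/-! ### Labels of the gates -/

theorem rLabel_leafZero (n d e) (t : Fin (rA n d)) (s : Fin (d + 2)) (h0 : s.1 = 0) :
    rLabel F n d e (blockGate t s) = .input (.inl t) := by
  have hlt := blockGate_lt t s
  have hmod := blockGate_mod t s
  unfold rLabel
  rw [dif_pos hlt, if_pos (by omega)]
  have h3 : (⟨((blockGate t s : Fin (rN n d)) : ℕ) / (d + 2), div_lt_rA hlt⟩ : Fin (rA n d))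
      = t := Fin.ext (blockGate_div t s)
  rw [h3]

theorem rLabel_leafPos (n d e) (t : Fin (rA n d)) (s : Fin (d + 2))
    (h0 : s.1 ≠ 0) (h1 : s.1 ≠ d + 1) :
    rLabel F n d e (blockGate t s) = .input (.inr ((mList e t).getD (s.1 - 1) 0)) := by
  have hlt := blockGate_lt t s
  have hmod := blockGate_mod t s
  unfold rLabel
  rw [dif_pos hlt, if_neg (by omega), if_neg (by omega)]
  have h3 : (⟨((blockGate t s : Fin (rN n d)) : ℕ) / (d + 2), div_lt_rA hlt⟩ : Fin (rA n d))
      = t := Fin.ext (blockGate_div t s)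
  rw [h3, hmod]

theorem rLabel_prodGate (n d e) (t : Fin (rA n d)) :
    rLabel F n d e (blockGate t ⟨d + 1, by omega⟩) = .prod := by
  have hlt := blockGate_lt t (⟨d + 1, by omega⟩ : Fin (d + 2))
  have hmod := blockGate_mod t (⟨d + 1, by omega⟩ : Fin (d + 2))
  unfold rLabel
  rw [dif_pos hlt, if_neg (by simp only [hmod]; omega), if_pos (by simp only [hmod])]

theorem rLabel_sumGate (n d e) (i : Fin (n + 1)) :
    rLabel F n d e (sumGate i) = .sum := by
  unfold rLabel
  rw [dif_neg (by simp only [sumGate_val]; omega)]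

/-! ### Incoming lists of the gates -/

theorem rIncoming_leaf (n d) (t : Fin (rA n d)) (s : Fin (d + 2)) (h1 : s.1 ≠ d + 1) :
    rIncoming F n d (blockGate t s) = [] := by
  have hlt := blockGate_lt t s
  have hmod := blockGate_mod t s
  unfold rIncoming
  rw [dif_pos hlt, if_neg (by omega)]

theorem rIncoming_prodGate (n d) (t : Fin (rA n d)) :
    rIncoming F n d (blockGate t ⟨d + 1, by omega⟩) =
      (List.finRange (d + 1)).map (fun s => (blockGate t s.castSucc, (1 : F))) := by
  have hlt := blockGate_lt t (⟨d + 1, by omega⟩ : Fin (d + 2))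
  have hmod := blockGate_mod t (⟨d + 1, by omega⟩ : Fin (d + 2))
  unfold rIncoming
  rw [dif_pos hlt, if_pos (by simp only [hmod])]
  have ht : (⟨((blockGate t (⟨d + 1, by omega⟩ : Fin (d + 2)) : Fin (rN n d)) : ℕ) / (d + 2),
      div_lt_rA hlt⟩ : Fin (rA n d)) = t := Fin.ext (blockGate_div t _)
  rw [ht]

theorem rIncoming_sumGate (n d) (i : Fin (n + 1)) :
    rIncoming F n d (sumGate i) =
      (List.finRange ((n + d).choose d)).map (fun k =>
        (blockGate (finProdFinEquiv (i, k)) ⟨d + 1, by omega⟩, (1 : F))) := by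
  unfold rIncoming
  rw [dif_neg (by simp only [sumGate_val]; omega)]
  apply List.map_congr_left
  intro k _
  have h3 : (⟨((sumGate i : Fin (rN n d)) : ℕ) - rA n d * (d + 2), by
      have hg := (sumGate i : Fin (rN n d)).isLt; simp only [rN] at hg; omega⟩ :
      Fin (n + 1)) = i := Fin.ext (by simp only [sumGate_val]; omega)
  rw [h3]

end ResNPAux
namespace ResNPAux

open MvPolynomial

variable (F : Type u) [Field F]

/-! ### Evaluation of the gates -/

theorem eval_leafZero (n d e) (t : Fin (rA n d)) (s : Fin (d + 2)) (h0 : s.1 = 0) :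
    (resCircuit F n d e).eval (blockGate t s) = X (.inl t) :=
  eval_input' _ _ _ (rLabel_leafZero F n d e t s h0)

theorem eval_leafPos (n d e) (t : Fin (rA n d)) (s : Fin (d + 2))
    (h0 : s.1 ≠ 0) (h1 : s.1 ≠ d + 1) :
    (resCircuit F n d e).eval (blockGate t s) =
      X (.inr ((mList e t).getD (s.1 - 1) 0)) :=
  eval_input' _ _ _ (rLabel_leafPos F n d e t s h0 h1)

theorem getD_map_finRange {α : Type} (dd : ℕ) (l : List α) (a : α) (hl : l.length = dd) :
    (List.finRange dd).map (fun r : Fin dd => l.getD r.1 a) = l := by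
  apply List.ext_getElem
  · simp [hl]
  · intro i h1 h2
    simp only [List.getElem_map, List.getElem_finRange]
    rw [List.getD_eq_getElem]
    · simp
    · omega

theorem eval_prodGate (n d e) (t : Fin (rA n d)) :
    (resCircuit F n d e).eval (blockGate t ⟨d + 1, by omega⟩) =
      X (.inl t) * monomial (((e (finProdFinEquiv.symm t).2).1).mapDomain Sum.inr) 1 := by
  rw [eval_prod' (resCircuit F n d e) (blockGate t ⟨d + 1, by omega⟩)
      (by rw [resCircuit_label]; exact rLabel_prodGate F n d e t),
    resCircuit_incoming, rIncoming_prodGate]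
  erw [List.map_map]
  simp only [Function.comp_def, map_one, one_mul]
  rw [List.finRange_succ, List.map_cons, List.prod_cons, List.map_map]
  simp only [Function.comp_def]
  have h0 : (resCircuit F n d e).eval (blockGate t ((0 : Fin (d + 1)).castSucc)) =
      X (.inl t) := eval_leafZero F n d e t _ rfl
  rw [h0]
  congr 1
  have htail : List.map
      (fun r : Fin d => (resCircuit F n d e).eval (blockGate t r.succ.castSucc))
      (List.finRange d) =
      List.map (fun r : Fin d => X (.inr ((mList e t).getD r.1 0))) (List.finRange d) := by
    apply List.map_congr_left
    intro r _
    have hv1 : ((r.succ.castSucc : Fin (d + 2)) : ℕ) = r.1 + 1 := rfl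
    have hr := r.isLt
    rw [eval_leafPos F n d e t r.succ.castSucc (by omega) (by omega)]
    simp only [hv1, Nat.add_sub_cancel]
  rw [htail]
  -- now the product of variables equals the monomial
  have hlist : (List.finRange d).map (fun r : Fin d => (X (.inr ((mList e t).getD r.1 0)) :
      MvPolynomial (Fin (rA n d) ⊕ Fin (n + 1)) F)) =
      (mList e t).map (fun j => X (.inr j)) := by
    conv_rhs => rw [← getD_map_finRange d (mList e t) 0 (length_mList e t)]
    rw [List.map_map]
    rfl
  rw [hlist]
  have hms : ((mList e t).map (fun j => (X (.inr j) :
      MvPolynomial (Fin (rA n d) ⊕ Fin (n + 1)) F))).prod =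
      ((Finsupp.toMultiset ((e (finProdFinEquiv.symm t).2).1)).map
        (fun j => (X (.inr j) : MvPolynomial (Fin (rA n d) ⊕ Fin (n + 1)) F))).prod := by
    rw [mList, ← Multiset.prod_coe, ← Multiset.map_coe, Multiset.coe_toList]
  rw [hms, multiset_prod_X _ Sum.inr_injective]

theorem eval_sumGate (n d e) (i : Fin (n + 1)) :
    (resCircuit F n d e).eval (sumGate i) = incidencePoly F n d e i := by
  rw [eval_sum' (resCircuit F n d e) (sumGate i)
      (by rw [resCircuit_label]; exact rLabel_sumGate F n d e i),
    resCircuit_incoming, rIncoming_sumGate]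
  erw [List.map_map]
  rw [incidencePoly, Fin.sum_univ_def]
  congr 1
  apply List.map_congr_left
  intro k _
  simp only [Function.comp_apply, map_one, one_mul]
  rw [eval_prodGate]
  have hz : (finProdFinEquiv.symm (finProdFinEquiv (i, k))).2 = k := by
    rw [Equiv.symm_apply_apply]
  rw [hz]

/-! ### Output gates -/

theorem mem_rIncoming_lt (n d) (g : Fin (rN n d)) (p) (hp : p ∈ rIncoming F n d g) :
    (p.1 : ℕ) < rA n d * (d + 2) := by
  unfold rIncoming at hp
  split_ifs at hp with h h1
  · simp only [List.mem_map] at hp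
    obtain ⟨s, -, rfl⟩ := hp
    exact blockGate_lt _ _
  · simp at hp
  · simp only [List.mem_map] at hp
    obtain ⟨k, -, rfl⟩ := hp
    exact blockGate_lt _ _

theorem isOutputGate_iff (n d e) (g : Fin (rN n d)) :
    (resCircuit F n d e).IsOutputGate g ↔ rA n d * (d + 2) ≤ (g : ℕ) := by
  constructor
  · intro hout
    by_contra hlt
    push_neg at hlt
    set t : Fin (rA n d) := ⟨(g : ℕ) / (d + 2), div_lt_rA hlt⟩ with ht
    have hdm := Nat.div_add_mod (g : ℕ) (d + 2)
    have hcomm : (d + 2) * ((g : ℕ) / (d + 2)) = ((g : ℕ) / (d + 2)) * (d + 2) :=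
      Nat.mul_comm _ _
    have hmodlt : (g : ℕ) % (d + 2) < d + 2 := Nat.mod_lt _ (by omega)
    by_cases hm : (g : ℕ) % (d + 2) = d + 1
    · -- product gate: referenced by a sum gate
      set i : Fin (n + 1) := (finProdFinEquiv.symm t).1 with hi
      set k : Fin ((n + d).choose d) := (finProdFinEquiv.symm t).2 with hk
      apply hout (sumGate i) (blockGate t ⟨d + 1, by omega⟩, (1 : F))
      · rw [resCircuit_incoming, rIncoming_sumGate]
        refine List.mem_map.2 ?_
        exact ⟨k, List.mem_finRange k, by
          rw [hi, hk, Prod.mk.eta, Equiv.apply_symm_apply]⟩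
      · apply Fin.ext
        simp only [blockGate, ht]
        omega
    · -- leaf: referenced by the product gate of its block
      apply hout (blockGate t ⟨d + 1, by omega⟩) (blockGate t ⟨(g : ℕ) % (d + 2), hmodlt⟩, (1 : F))
      · rw [resCircuit_incoming, rIncoming_prodGate]
        refine List.mem_map.2 ?_
        refine ⟨⟨(g : ℕ) % (d + 2), by omega⟩, List.mem_finRange _, ?_⟩
        congr 2
      · apply Fin.ext
        simp only [blockGate, ht]
        omega
  · intro hge g' p hp hpg
    have := mem_rIncoming_lt F n d g' p (by rw [resCircuit_incoming] at hp; exact hp)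
    rw [hpg] at this
    omega

theorem outputs_mem_iff (n d e) (f : MvPolynomial (Fin (rA n d) ⊕ Fin (n + 1)) F) :
    f ∈ (resCircuit F n d e).outputs ↔ ∃ i, f = incidencePoly F n d e i := by
  unfold Circuit.outputs
  simp only [Multiset.mem_map, Finset.mem_val, Finset.mem_filter, Finset.mem_univ, true_and]
  constructor
  · rintro ⟨g, hg, rfl⟩
    rw [isOutputGate_iff F n d e g] at hg
    have hi : (g : ℕ) - rA n d * (d + 2) < n + 1 := by
      have h4 : (g : ℕ) < rA n d * (d + 2) + (n + 1) := g.isLt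
      omega
    refine ⟨⟨_, hi⟩, ?_⟩
    have hge : g = sumGate ⟨(g : ℕ) - rA n d * (d + 2), hi⟩ := Fin.ext (by
      simp only [sumGate_val]; omega)
    rw [congrArg (resCircuit F n d e).eval hge]
    exact eval_sumGate F n d e _
  · rintro ⟨i, rfl⟩
    exact ⟨sumGate i, (isOutputGate_iff F n d e _).2 (by simp only [sumGate_val]; omega),
      eval_sumGate F n d e i⟩

end ResNPAux
namespace ResNPAux

open MvPolynomial

variable (F : Type u) [Field F]

/-! ### Homogeneity -/

theorem weight_mapDomain_inr (a b : ℕ) (M : Fin b →₀ ℕ) :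
    (Finsupp.weight (biWeight a b)) (M.mapDomain Sum.inr) = ((0 : ℕ), M.sum fun _ k => k) := by
  rw [Finsupp.weight_apply, Finsupp.sum_mapDomain_index_inj Sum.inr_injective]
  have h1 : ∀ (j : Fin b) (k : ℕ), k • biWeight a b (Sum.inr j) = ((0 : ℕ), k) := by
    intro j k
    simp [biWeight]
  rw [Finsupp.sum_congr (fun j _ => h1 j (M j))]
  apply Prod.ext
  · simp [Finsupp.sum, Prod.fst_sum]
  · simp [Finsupp.sum, Prod.snd_sum]

theorem monomial_inr_homog (a b dd : ℕ) (M : Fin b →₀ ℕ) (hM : (M.sum fun _ k => k) = dd) :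
    IsWeightedHomogeneous (biWeight a b) (monomial (M.mapDomain Sum.inr) (1 : F)) (0, dd) :=
  isWeightedHomogeneous_monomial _ _ _ (by rw [weight_mapDomain_inr, hM])

theorem incidencePoly_homog (n d e) (i : Fin (n + 1)) :
    IsWeightedHomogeneous (biWeight (rA n d) (n + 1)) (incidencePoly F n d e i) (1, d) := by
  rw [incidencePoly, ← mem_weightedHomogeneousSubmodule]
  apply Submodule.sum_mem
  intro k _
  rw [mem_weightedHomogeneousSubmodule]
  have h2 : ((1, d) : ℕ × ℕ) = (1, 0) + (0, d) := by simp
  rw [h2]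
  exact (isWeightedHomogeneous_X F _ _).mul (monomial_inr_homog F _ _ d _ (e k).2)

theorem resCircuit_biHom (n d e) : (resCircuit F n d e).BiHom := by
  intro g
  by_cases h : (g : ℕ) < rA n d * (d + 2)
  · set t : Fin (rA n d) := ⟨(g : ℕ) / (d + 2), div_lt_rA h⟩ with ht
    have hmodlt : (g : ℕ) % (d + 2) < d + 2 := Nat.mod_lt _ (by omega)
    have hg : g = blockGate t ⟨(g : ℕ) % (d + 2), hmodlt⟩ := Fin.ext (by
      simp only [blockGate, ht]
      have hdm := Nat.div_add_mod (g : ℕ) (d + 2)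
      have hcomm := Nat.mul_comm (d + 2) ((g : ℕ) / (d + 2))
      omega)
    by_cases hm : (g : ℕ) % (d + 2) = d + 1
    · refine ⟨(1, d), ?_⟩
      rw [hg]
      have hs : (⟨(g : ℕ) % (d + 2), hmodlt⟩ : Fin (d + 2)) = ⟨d + 1, by omega⟩ := Fin.ext hm
      rw [hs, eval_prodGate]
      have h2 : ((1, d) : ℕ × ℕ) = (1, 0) + (0, d) := by simp
      rw [h2]
      exact (isWeightedHomogeneous_X F _ _).mul (monomial_inr_homog F _ _ d _ (e _).2)
    · by_cases h0 : (g : ℕ) % (d + 2) = 0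
      · refine ⟨(1, 0), ?_⟩
        rw [hg, eval_leafZero F n d e t _ h0]
        exact isWeightedHomogeneous_X F _ _
      · refine ⟨(0, 1), ?_⟩
        rw [hg, eval_leafPos F n d e t _ h0 hm]
        exact isWeightedHomogeneous_X F _ _
  · have hi : (g : ℕ) - rA n d * (d + 2) < n + 1 := by
      have h4 : (g : ℕ) < rA n d * (d + 2) + (n + 1) := g.isLt
      omega
    have hg : g = sumGate ⟨_, hi⟩ := Fin.ext (by simp only [sumGate_val]; omega)
    exact ⟨(1, d), by rw [hg, eval_sumGate]; exact incidencePoly_homog F n d e _⟩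

/-! ### Degree bound -/

theorem incidencePoly_totalDegree (n d e) (i : Fin (n + 1)) :
    (incidencePoly F n d e i).totalDegree ≤ d + 1 := by
  rw [incidencePoly]
  apply le_trans (totalDegree_finset_sum _ _)
  apply Finset.sup_le
  intro k _
  apply le_trans (totalDegree_mul _ _)
  have h1 : (X (Sum.inl (finProdFinEquiv (i, k))) :
      MvPolynomial (Fin ((n+1) * (n+d).choose d) ⊕ Fin (n+1)) F).totalDegree = 1 :=
    totalDegree_X _
  have h2 : (monomial ((e k).1.mapDomain Sum.inr) (1 : F) :
      MvPolynomial (Fin ((n+1) * (n+d).choose d) ⊕ Fin (n+1)) F).totalDegree = d := by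
    rw [totalDegree_monomial _ one_ne_zero,
      Finsupp.sum_mapDomain_index_inj Sum.inr_injective]
    exact (e k).2
  rw [h1, h2]
  omega

/-! ### Size and output-count bounds -/

theorem rIncoming_length_le (n d : ℕ) (g : Fin (rN n d)) :
    (rIncoming F n d g).length ≤ (d + 1) + (n + d).choose d := by
  unfold rIncoming
  split_ifs with h h1 <;> simp

theorem size_le (n d e) :
    (resCircuit F n d e).size ≤ rN n d * ((d + 1) + (n + d).choose d) := by
  unfold Circuit.size
  calc ∑ g : Fin (resCircuit F n d e).numGates, ((resCircuit F n d e).incoming g).length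
      ≤ (Finset.univ : Finset (Fin (rN n d))).card • ((d + 1) + (n + d).choose d) :=
        Finset.sum_le_card_nsmul _ _ _ (fun g _ => rIncoming_length_le F n d g)
    _ = rN n d * ((d + 1) + (n + d).choose d) := by
        simp [Finset.card_univ, smul_eq_mul]

theorem card_outputs_le (n d e) :
    Multiset.card (resCircuit F n d e).outputs ≤ rN n d := by
  classical
  unfold Circuit.outputs
  rw [Multiset.card_map]
  have h1 : (Finset.filter (fun g => (resCircuit F n d e).IsOutputGate g) Finset.univ).val ≤
      (Finset.univ : Finset (Fin (rN n d))).val := by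
    rw [Finset.filter_val]
    exact Multiset.filter_le _ _
  have h2 := Multiset.card_le_card h1
  have h3 : Multiset.card (Finset.univ : Finset (Fin (rN n d))).val = rN n d := by
    rw [show Multiset.card (Finset.univ : Finset (Fin (rN n d))).val =
      (Finset.univ : Finset (Fin (rN n d))).card from rfl, Finset.card_univ, Fintype.card_fin]
  exact h3 ▸ h2

theorem polyBounded_rA (d : ℕ) : PolyBounded (fun n => rA n d) :=
  polyBounded_mul polyBounded_succ (polyBounded_choose d)

theorem polyBounded_rN (d : ℕ) : PolyBounded (fun n => rN n d) :=
  polyBounded_add (polyBounded_mul (polyBounded_rA d) (polyBounded_const (d + 2)))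
    polyBounded_succ

end ResNPAux
/-- **The resultant is in `NP_proj`** (Example 4 of the paper): for fixed `d ≥ 1`, the
sequence of resultant varieties `Res_{d,n} = π₁(Z_{d,n}) ⊆ ℙ^{N(n)}`,
`N(n) = (n+1)·binom(n+d,d) - 1`, consisting of the tuples `(f_0,…,f_n)` of degree-`d` forms
in `x_0,…,x_n` having a common nonzero solution, is in `NP_proj`. -/
theorem resultant_in_NPproj (d : ℕ) (hd : 1 ≤ d) (F : Type u) [Field F] :
    ∃ e : ∀ n : ℕ,
        Fin ((n + d).choose d) ≃ {M : Fin (n + 1) →₀ ℕ // (M.sum fun _ k => k) = d},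
      PSeq.InNPproj
        (⟨fun n => (n + 1) * (n + d).choose d,
          fun n => Prod.fst '' (biZeroSet
            {f | ∃ i : Fin (n + 1), f = incidencePoly F n d (e n) i})⟩ : PSeq F) := by
  refine ⟨fun n => ResNPAux.monEquiv n d, ?_⟩
  refine ⟨fun n => n + 1,
    fun n => biZeroSet
      {f | f ∈ (ResNPAux.resCircuit F n d (ResNPAux.monEquiv n d)).outputs}, ?_, ?_⟩
  · refine ⟨ResNPAux.polyBounded_rA d, ResNPAux.polyBounded_succ,
      fun n => ResNPAux.resCircuit F n d (ResNPAux.monEquiv n d), ?_, ?_, ⟨fun _ => d + 1,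
        ResNPAux.polyBounded_const (d + 1), ?_⟩,
      fun n => ResNPAux.resCircuit_biHom F n d _, fun n => rfl⟩
    · exact ResNPAux.polyBounded_of_le (fun n => ResNPAux.size_le F n d _)
        (ResNPAux.polyBounded_mul (ResNPAux.polyBounded_rN d)
          (ResNPAux.polyBounded_add (ResNPAux.polyBounded_const (d + 1))
            (ResNPAux.polyBounded_choose d)))
    · exact ResNPAux.polyBounded_of_le (fun n => ResNPAux.card_outputs_le F n d _)
        (ResNPAux.polyBounded_rN d)
    · intro n f hf
      obtain ⟨i, rfl⟩ := (ResNPAux.outputs_mem_iff F n d (ResNPAux.monEquiv n d) f).1 hf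
      exact ResNPAux.incidencePoly_totalDegree F n d _ i
  · intro n
    have hset : {f | f ∈ (ResNPAux.resCircuit F n d (ResNPAux.monEquiv n d)).outputs} =
        {f | ∃ i : Fin (n + 1), f = incidencePoly F n d (ResNPAux.monEquiv n d) i} :=
      Set.ext fun f => ResNPAux.outputs_mem_iff F n d (ResNPAux.monEquiv n d) f
    simp only
    rw [hset]
end
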